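/- arXiv:2001.06242 — 8 statements merged into one kernel-verified Lean document; each statement's English description precedes it below -/
import Mathlib

section
/- If a string x contains three occurrences of the same string b at positions j_1 < j_2 < j_3 with j_3 - j_1 < |b|, then b has exponent strictly greater than 2 (i.e., the smallest period p of b satisfies |b|/p > 2). -/
/-! Occurrences of `b` in `x` at positions `u ≤ v` make `v - u` a period of `b`. One of the gaps
`j₂ - j₁`, `j₃ - j₂` is at most half of `j₃ - j₁ < |b|`, so the least period is below `|b| / 2`. -/

open scoped BigOperators

/-- One duplication-with-transposition step: `x = a·b·c·d → y = a·b·c·b·d`, `b` non-empty. -/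
def DupStep {q : ℕ} (x y : List (Fin q)) : Prop :=
  ∃ a b c d : List (Fin q), b ≠ [] ∧ x = a ++ b ++ c ++ d ∧ y = a ++ b ++ c ++ b ++ d

/-- `DupPath m x y` : `y` is obtained from `x` by exactly `m` duplication steps. -/
def DupPath {q : ℕ} : ℕ → List (Fin q) → List (Fin q) → Prop
  | 0, x, y => x = y
  | n + 1, x, y => ∃ z, DupStep x z ∧ DupPath n z y

/-- Hamming distance between two lists (of equal length in intended use). -/
def listHammingDist {q : ℕ} (b b' : List (Fin q)) : ℕ :=
  ((b.zip b').filter fun p => decide (p.1 ≠ p.2)).length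

/-- One β-approximate duplication-with-transposition step. -/
def ApproxStep {q : ℕ} (β : ℝ) (x y : List (Fin q)) : Prop :=
  ∃ a b c bh d : List (Fin q), b ≠ [] ∧ bh.length = b.length ∧
    (listHammingDist b bh : ℝ) ≤ β * b.length ∧
    x = a ++ b ++ c ++ d ∧ y = a ++ b ++ c ++ bh ++ d

/-- `ApproxPath β m x y` : `y` obtained from `x` by exactly `m` β-approximate duplications. -/
def ApproxPath {q : ℕ} (β : ℝ) : ℕ → List (Fin q) → List (Fin q) → Prop
  | 0, x, y => x = y
  | n + 1, x, y => ∃ z, ApproxStep β x z ∧ ApproxPath β n z y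

/-- The root of a string: the subsequence of first occurrences of symbols. -/
def firstOccs {q : ℕ} (l : List (Fin q)) : List (Fin q) :=
  l.foldl (fun acc a => if a ∈ acc then acc else acc ++ [a]) []

theorem List.getElem?_eq_getElem?_add_of_take_drop_eq {α : Type*} {x b : List α} {u v : ℕ}
    (huv : u ≤ v) (hu : (x.drop u).take b.length = b) (hv : (x.drop v).take b.length = b)
    {i : ℕ} (hi : i + (v - u) < b.length) : b[i]? = b[i + (v - u)]? :=
  calc b[i]? = x[v + i]? := by
        rw [← hv, List.getElem?_take_of_lt (by omega), List.getElem?_drop]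
    _ = x[u + (i + (v - u))]? := by congr 1; omega
    _ = b[i + (v - u)]? := by
        rw [← hu, List.getElem?_take_of_lt hi, List.getElem?_drop]

theorem stmt2_general (q : ℕ) (x b : List (Fin q))
    (j1 j2 j3 : ℕ) (h12 : j1 < j2) (h23 : j2 < j3) (hspan : j3 - j1 < b.length)
    (hocc : ∀ j ∈ ({j1, j2, j3} : Set ℕ),
      j + b.length ≤ x.length ∧ (x.drop j).take b.length = b)
    (p : ℕ)
    (hp : IsLeast {p : ℕ | 0 < p ∧ ∀ i, i + p < b.length → b[i]? = b[i + p]?} p) :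
    2 * p < b.length := by
  have occ : ∀ j ∈ ({j1, j2, j3} : Set ℕ), (x.drop j).take b.length = b :=
    fun j hj => (hocc j hj).2
  have hp12 : p ≤ j2 - j1 := hp.2 ⟨by omega, fun _ =>
    List.getElem?_eq_getElem?_add_of_take_drop_eq h12.le (occ j1 (by simp)) (occ j2 (by simp))⟩
  have hp23 : p ≤ j3 - j2 := hp.2 ⟨by omega, fun _ =>
    List.getElem?_eq_getElem?_add_of_take_drop_eq h23.le (occ j2 (by simp)) (occ j3 (by simp))⟩
  omega

/-- three mutually overlapping occurrences of `b` (positions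
`j₁ < j₂ < j₃` with `j₃ - j₁ < |b|`) force the least period `p` of `b` to
satisfy `2p < |b|`, i.e. exponent strictly greater than 2. -/
theorem stmt2 (q : ℕ) (x b : List (Fin q)) (hb : b ≠ [])
    (j1 j2 j3 : ℕ) (h12 : j1 < j2) (h23 : j2 < j3) (hspan : j3 - j1 < b.length)
    (hocc : ∀ j ∈ ({j1, j2, j3} : Set ℕ),
      j + b.length ≤ x.length ∧ (x.drop j).take b.length = b)
    (p : ℕ)
    (hp : IsLeast {p : ℕ | 0 < p ∧ ∀ i, i + p < b.length → b[i]? = b[i + p]?} p) :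
    2 * p < b.length :=
  stmt2_general q x b j1 j2 j3 h12 h23 hspan hocc p hp
end

section
/- Let x be a q-ary string of length n and k a positive integer with n - k + 1 > 2q^k + (k^2/2)·q^{k/2}. Then x can be written as x = a·b·c·b·d where a, c, d are (possibly empty) strings and b is a string of length at least k, i.e., x contains two non-overlapping occurrences of the same string of length at least k. -/
open scoped BigOperators

/-!
Suppose no length-`k` factor of `x` occurs twice without overlap. Then all occurrences of a
factor `w` lie in `k` consecutive positions, so `w` occurs at most `k` times. Two occurrences at
`i < j` make `j - i` a period of `w`, and among three occurrences two are at most `k / 2` apart;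
so a factor without a period `p ≤ k / 2` occurs at most twice. A word with period `p` is determined
by its first `p` letters, so at most `∑_{p ≤ k/2} q^p ≤ (k/2) q^{k/2}` factors have such a period.
Summing over factors, the `n - k + 1` positions number at most `2 q^k + k (k/2) q^{k/2}`.
-/

open Finset

theorem Finset.card_le_of_forall_lt_add {S : Finset ℕ} {k : ℕ}
    (h : ∀ i ∈ S, ∀ j ∈ S, j < i + k) : #S ≤ k := by
  rcases S.eq_empty_or_nonempty with rfl | hS
  · simp
  calc #S ≤ #(Ico (S.min' hS) (S.min' hS + k)) :=
        card_le_card fun j hj => mem_Ico.mpr ⟨S.min'_le j hj, h _ (S.min'_mem hS) j hj⟩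
    _ = k := by simp

theorem Finset.card_le_two_of_forall_lt_add {S : Finset ℕ} {k : ℕ}
    (h : ∀ i ∈ S, ∀ j ∈ S, j < i + k) (hgap : ∀ i ∈ S, ∀ j ∈ S, i < j → k / 2 < j - i) :
    #S ≤ 2 := by
  rcases S.eq_empty_or_nonempty with rfl | hS
  · simp
  set m := S.min' hS
  -- every other element lies in `(m + k / 2, m + k)`, too short to hold two points `> k / 2` apart
  have hm := S.min'_mem hS
  have no_pair : ∀ i ∈ S.erase m, ∀ j ∈ S.erase m, ¬ i < j := by
    intro i hi j hj hij
    have hmi : m < i :=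
      lt_of_le_of_ne (S.min'_le i (mem_of_mem_erase hi)) (ne_of_mem_erase hi).symm
    have := hgap m hm i (mem_of_mem_erase hi) hmi
    have := hgap i (mem_of_mem_erase hi) j (mem_of_mem_erase hj) hij
    have := h m hm j (mem_of_mem_erase hj)
    omega
  have : #(S.erase m) ≤ 1 := card_le_one.mpr fun i hi j hj =>
    le_antisymm (not_lt.mp (no_pair j hj i hi)) (not_lt.mp (no_pair i hi j hj))
  rw [card_erase_of_mem hm] at this
  omega

namespace List

variable {α : Type*}

def HasNonoverlappingRepeat (x : List α) (k : ℕ) : Prop :=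
  ∃ a b c d : List α, x = a ++ b ++ c ++ b ++ d ∧ k ≤ b.length

theorem hasNonoverlappingRepeat_of_take_drop_eq {x : List α} {k i j : ℕ} (hij : i + k ≤ j)
    (hj : j + k ≤ x.length) (h : (x.drop i).take k = (x.drop j).take k) :
    x.HasNonoverlappingRepeat k := by
  obtain ⟨m, rfl⟩ : ∃ m, j = i + k + m := ⟨j - (i + k), by omega⟩
  have hsplit : x = x.take i ++ (x.drop i).take k ++ (x.drop (i + k)).take m ++
      (x.drop (i + k + m)).take k ++ x.drop (i + k + m + k) := by
    rw [← take_add, ← take_add, append_assoc, ← drop_drop (i := k), take_append_drop,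
      take_append_drop]
  rw [← h] at hsplit
  exact ⟨_, _, _, _, hsplit, by simp only [length_take, length_drop]; omega⟩

def HasShortPeriod (w : List α) : Prop :=
  ∃ p ∈ Finset.Icc 1 (w.length / 2), w.HasPeriod p

theorem eq_of_hasPeriod_of_take_eq {w v : List α} {p : ℕ} (hp : 0 < p) (hw : w.HasPeriod p)
    (hv : v.HasPeriod p) (hlen : w.length = v.length) (htake : w.take p = v.take p) : w = v := by
  have reduce : ∀ u : List α, u.HasPeriod p → ∀ i < u.length, u[i]? = (u.take p)[i % p]? := by
    intro u hu i hi
    rw [getElem?_take, if_pos (Nat.mod_lt i hp), hasPeriod_iff_forall_getElem?_mod.mp hu i hi]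
  apply ext_getElem?
  intro i
  by_cases hi : i < w.length
  · rw [reduce w hw i hi, reduce v hv i (hlen ▸ hi), htake]
  · rw [getElem?_eq_none (by omega), getElem?_eq_none (by omega)]

variable [DecidableEq α]

instance (w : List α) (p : ℕ) : Decidable (w.HasPeriod p) :=
  inferInstanceAs (Decidable (w <+: w.take p ++ w))

instance (w : List α) : Decidable w.HasShortPeriod :=
  inferInstanceAs (Decidable (∃ p ∈ Finset.Icc 1 (w.length / 2), w.HasPeriod p))

def occurrences (x : List α) (k : ℕ) (w : List α) : Finset ℕ :=
  {i ∈ Finset.range (x.length + 1 - k) | (x.drop i).take k = w}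

theorem mem_occurrences {x w : List α} {k i : ℕ} :
    i ∈ x.occurrences k w ↔ i + k ≤ x.length ∧ (x.drop i).take k = w := by
  rw [occurrences, Finset.mem_filter, Finset.mem_range]
  exact and_congr_left fun _ => by omega

theorem getElem?_of_mem_occurrences {x w : List α} {k i s : ℕ} (hi : i ∈ x.occurrences k w)
    (hs : s < k) : w[s]? = x[i + s]? := by
  rw [← (mem_occurrences.mp hi).2, getElem?_take, if_pos hs, getElem?_drop]

theorem length_of_mem_occurrences {x w : List α} {k i : ℕ} (hi : i ∈ x.occurrences k w) :
    w.length = k := by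
  obtain ⟨hik, rfl⟩ := mem_occurrences.mp hi
  simp only [length_take, length_drop]; omega

theorem lt_add_of_mem_occurrences {x w : List α} {k i j : ℕ} (hx : ¬ x.HasNonoverlappingRepeat k)
    (hi : i ∈ x.occurrences k w) (hj : j ∈ x.occurrences k w) : j < i + k := by
  rw [mem_occurrences] at hi hj
  by_contra! hij
  exact hx (hasNonoverlappingRepeat_of_take_drop_eq hij hj.1 (hi.2.trans hj.2.symm))

theorem hasPeriod_of_mem_occurrences {x w : List α} {k i j : ℕ} (hi : i ∈ x.occurrences k w)
    (hj : j ∈ x.occurrences k w) (hij : i ≤ j) : w.HasPeriod (j - i) := by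
  rw [hasPeriod_iff_getElem?, length_of_mem_occurrences hi]
  intro t ht
  rw [getElem?_of_mem_occurrences hj (by omega), getElem?_of_mem_occurrences hi (by omega)]
  congr 1
  omega

theorem card_occurrences_le {x w : List α} {k : ℕ} (hx : ¬ x.HasNonoverlappingRepeat k) :
    #(x.occurrences k w) ≤ k :=
  Finset.card_le_of_forall_lt_add fun _ hi _ hj => lt_add_of_mem_occurrences hx hi hj

theorem card_occurrences_le_two {x w : List α} {k : ℕ} (hx : ¬ x.HasNonoverlappingRepeat k)
    (hw : ¬ w.HasShortPeriod) : #(x.occurrences k w) ≤ 2 := by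
  refine Finset.card_le_two_of_forall_lt_add
    (fun _ hi _ hj => lt_add_of_mem_occurrences hx hi hj) ?_
  intro i hi j hj hij
  by_contra! hsmall
  exact hw ⟨j - i, by rw [Finset.mem_Icc, length_of_mem_occurrences hi]; omega,
    hasPeriod_of_mem_occurrences hi hj hij.le⟩

variable [Fintype α]

theorem card_filter_hasPeriod_le {T : Finset (List α)} {k p : ℕ} (hT : ∀ w ∈ T, w.length = k)
    (hp : 0 < p) (hpk : p ≤ k) : #{w ∈ T | w.HasPeriod p} ≤ Fintype.card α ^ p := by
  set P := {w ∈ T | w.HasPeriod p}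
  have hinj : Set.InjOn (take p) (P : Set (List α)) := by
    intro w hw v hv h
    simp only [P, Finset.mem_coe, Finset.mem_filter] at hw hv
    exact eq_of_hasPeriod_of_take_eq hp hw.2 hv.2 ((hT w hw.1).trans (hT v hv.1).symm) h
  have hlen : ∀ u ∈ P.image (take p), u.length = p := by
    simp only [mem_image, P, Finset.mem_filter]
    rintro u ⟨w, ⟨hw, -⟩, rfl⟩
    simp [hT w hw, hpk]
  calc #P = #(P.image (take p)) := (card_image_of_injOn hinj).symm
    _ = #{u ∈ P.image (take p) | u.length = p} := by rw [filter_true_of_mem hlen]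
    _ ≤ Fintype.card α ^ p := card_filter_length_eq_le

theorem card_filter_hasShortPeriod_le {T : Finset (List α)} {k : ℕ}
    (hT : ∀ w ∈ T, w.length = k) :
    #{w ∈ T | w.HasShortPeriod} ≤ ∑ p ∈ Finset.Icc 1 (k / 2), Fintype.card α ^ p := by
  calc #{w ∈ T | w.HasShortPeriod}
      ≤ #((Finset.Icc 1 (k / 2)).biUnion fun p => {w ∈ T | w.HasPeriod p}) := by
        refine card_le_card fun w hw => ?_
        obtain ⟨hwT, p, hp, hper⟩ := Finset.mem_filter.mp hw
        rw [hT w hwT] at hp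
        exact mem_biUnion.mpr ⟨p, hp, Finset.mem_filter.mpr ⟨hwT, hper⟩⟩
    _ ≤ ∑ p ∈ Finset.Icc 1 (k / 2), #{w ∈ T | w.HasPeriod p} := card_biUnion_le
    _ ≤ _ := Finset.sum_le_sum fun p hp => by
        rw [Finset.mem_Icc] at hp
        exact card_filter_hasPeriod_le hT (by omega) (by omega)

theorem length_add_one_sub_le_of_not_hasNonoverlappingRepeat {x : List α} {k : ℕ}
    (hx : ¬ x.HasNonoverlappingRepeat k) :
    x.length + 1 - k
      ≤ 2 * Fintype.card α ^ k + k * ∑ p ∈ Finset.Icc 1 (k / 2), Fintype.card α ^ p := by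
  set T := (Finset.range (x.length + 1 - k)).image fun i => (x.drop i).take k
  have hT : ∀ w ∈ T, w.length = k := by
    simp only [T, mem_image, Finset.mem_range]
    rintro w ⟨i, hi, rfl⟩
    simp only [length_take, length_drop]; omega
  have hcardT : #T ≤ Fintype.card α ^ k := by
    rw [← filter_true_of_mem hT]; exact card_filter_length_eq_le
  calc x.length + 1 - k = ∑ w ∈ T, #(x.occurrences k w) := by
        rw [← Finset.card_range (x.length + 1 - k),
          Finset.card_eq_sum_card_image fun i => (x.drop i).take k]
        rfl
    _ = ∑ w ∈ T with w.HasShortPeriod, #(x.occurrences k w)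
        + ∑ w ∈ T with ¬ w.HasShortPeriod, #(x.occurrences k w) :=
        (Finset.sum_filter_add_sum_filter_not _ _ _).symm
    _ ≤ ∑ w ∈ T with w.HasShortPeriod, k + ∑ w ∈ T with ¬ w.HasShortPeriod, 2 := by
        gcongr with w _ w hw
        · exact card_occurrences_le hx
        · exact card_occurrences_le_two hx (Finset.mem_filter.mp hw).2
    _ = #{w ∈ T | w.HasShortPeriod} * k + #{w ∈ T | ¬ w.HasShortPeriod} * 2 := by
        simp only [Finset.sum_const, smul_eq_mul]
    _ ≤ (∑ p ∈ Finset.Icc 1 (k / 2), Fintype.card α ^ p) * k + Fintype.card α ^ k * 2 := by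
        gcongr
        · exact card_filter_hasShortPeriod_le hT
        · exact (card_filter_le _ _).trans hcardT
    _ = _ := by ring

end List

theorem Nat.sum_Icc_pow_le {q : ℕ} (hq : 1 ≤ q) (m : ℕ) :
    ∑ p ∈ Finset.Icc 1 m, q ^ p ≤ m * q ^ m :=
  calc ∑ p ∈ Finset.Icc 1 m, q ^ p ≤ #(Finset.Icc 1 m) • q ^ m :=
        Finset.sum_le_card_nsmul _ _ _ fun _ hp =>
          Nat.pow_le_pow_right hq (Finset.mem_Icc.mp hp).2
    _ = m * q ^ m := by simp

theorem Real.natCast_div_two_mul_pow_le {q : ℝ} (hq : 1 ≤ q) (k : ℕ) :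
    ((k / 2 : ℕ) : ℝ) * q ^ (k / 2) ≤ k / 2 * q ^ ((k : ℝ) / 2) := by
  have hk : ((k / 2 : ℕ) : ℝ) ≤ k / 2 := Nat.cast_div_le
  have hpow : q ^ (k / 2) ≤ q ^ ((k : ℝ) / 2) := by
    rw [← Real.rpow_natCast]
    exact Real.rpow_le_rpow_of_exponent_le hq hk
  exact mul_le_mul hk hpow (by positivity) (by positivity)

theorem stmt3_general (q k n : ℕ) (hq : 1 ≤ q) (x : List (Fin q))
    (hn : x.length = n)
    (h : (2 : ℝ) * (q : ℝ) ^ k + ((k : ℝ) ^ 2 / 2) * (q : ℝ) ^ ((k : ℝ) / 2)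
        < (n : ℝ) - (k : ℝ) + 1) :
    ∃ a b c d : List (Fin q), x = a ++ b ++ c ++ b ++ d ∧ k ≤ b.length := by
  by_contra hx
  have hcount : n + 1 - k ≤ 2 * q ^ k + k * (k / 2 * q ^ (k / 2)) := by
    have := List.length_add_one_sub_le_of_not_hasNonoverlappingRepeat hx
    rw [hn, Fintype.card_fin] at this
    exact this.trans (by gcongr; exact Nat.sum_Icc_pow_le hq _)
  have hkn : k ≤ n + 1 := by
    have : (0 : ℝ) ≤ 2 * (q : ℝ) ^ k + ((k : ℝ) ^ 2 / 2) * (q : ℝ) ^ ((k : ℝ) / 2) := by positivity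
    exact_mod_cast (show (k : ℝ) ≤ n + 1 by linarith)
  have hreal : ((n + 1 - k : ℕ) : ℝ)
      ≤ 2 * (q : ℝ) ^ k + k * (((k / 2 : ℕ) : ℝ) * (q : ℝ) ^ (k / 2)) := by
    exact_mod_cast hcount
  rw [Nat.cast_sub hkn] at hreal
  push_cast at hreal
  have hhalf := mul_le_mul_of_nonneg_left
    (Real.natCast_div_two_mul_pow_le (by exact_mod_cast hq : (1 : ℝ) ≤ q) k) k.cast_nonneg
  linarith [show (k : ℝ) * (k / 2 * (q : ℝ) ^ ((k : ℝ) / 2))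
    = (k : ℝ) ^ 2 / 2 * (q : ℝ) ^ ((k : ℝ) / 2) by ring]

/-- Lemma 1: if `n - k + 1 > 2q^k + (k²/2)q^{k/2}` then a `q`-ary
string of length `n` contains two non-overlapping equal substrings of length ≥ k. -/
theorem stmt3 (q k n : ℕ) (hq : 1 ≤ q) (hk : 0 < k) (x : List (Fin q))
    (hn : x.length = n)
    (h : (2 : ℝ) * (q : ℝ) ^ k + ((k : ℝ) ^ 2 / 2) * (q : ℝ) ^ ((k : ℝ) / 2)
        < (n : ℝ) - (k : ℝ) + 1) :
    ∃ a b c d : List (Fin q), x = a ++ b ++ c ++ b ++ d ∧ k ≤ b.length :=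
  stmt3_general q k n hq x hn h
end

section
/- Let y be a q-ary string obtained from x by one deduplication with transposition, i.e., y = a·b·c·b·d and x = a·b·c·d with b non-empty. Then for any positive integer k, the number of distinct length-k substrings of x is at least the number of distinct length-k substrings of y minus 2(k-1). -/
open scoped BigOperators

/-! A length-`k` factor of `xs ++ ys` that is a factor of neither `xs` nor `ys` is a nonempty
suffix of `xs` followed by a nonempty prefix of `ys`, so it is determined by the length
`j ∈ [1, k)` of its part in `xs`: at most `k - 1` factors cross each boundary. Reading
`y = (a·b·c) ++ (b·d)` and then `b·d = b ++ d`, every length-`k` factor of `y` either lies in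
one of `a·b·c`, `b`, `d` (all factors of `x`) or crosses one of these two boundaries. -/

namespace List

variable {α : Type*}

def crossingInfixes [DecidableEq α] (k : ℕ) (xs ys : List α) : Finset (List α) :=
  (Finset.Ico 1 k).image fun j => xs.drop (xs.length - j) ++ ys.take (k - j)

theorem card_crossingInfixes_le [DecidableEq α] (k : ℕ) (xs ys : List α) :
    (crossingInfixes k xs ys).card ≤ k - 1 :=
  Finset.card_image_le.trans (Nat.card_Ico 1 k).le

theorem infix_append_trichotomy [DecidableEq α] {k : ℕ} {s xs ys : List α}
    (hs : s.length = k) (h : s <:+: xs ++ ys) :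
    s <:+: xs ∨ s <:+: ys ∨ s ∈ crossingInfixes k xs ys := by
  rcases infix_append_iff_ne_nil.mp h with h | h | ⟨l₁, l₂, h₁, h₂, rfl, hsuf, hpre⟩
  · exact .inl h
  · exact .inr (.inl h)
  refine .inr (.inr (Finset.mem_image.mpr ⟨l₁.length, ?_, ?_⟩))
  · have := length_pos_iff.mpr h₁
    have := length_pos_iff.mpr h₂
    simp only [length_append] at hs
    exact Finset.mem_Ico.mpr ⟨by omega, by omega⟩
  · rw [← suffix_iff_eq_drop.mp hsuf, ← hs, length_append, Nat.add_sub_cancel_left,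
      ← prefix_iff_eq_take.mp hpre]

theorem finite_setOf_length_eq_infix (k : ℕ) (l : List α) :
    {s | s.length = k ∧ s <:+: l}.Finite :=
  l.sublists.finite_toSet.subset fun _ hs => mem_sublists.mpr hs.2.sublist

theorem infix_dedup_or_mem_crossingInfixes [DecidableEq α] {k : ℕ} {s a b c d : List α} (hs : s.length = k)
    (h : s <:+: a ++ b ++ c ++ b ++ d) :
    s <:+: a ++ b ++ c ++ d ∨ s ∈ crossingInfixes k (a ++ b ++ c) (b ++ d) ∨
      s ∈ crossingInfixes k b d := by
  have habc : a ++ b ++ c <:+: a ++ b ++ c ++ d := (prefix_append _ _).isInfix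
  have hb : b <:+: a ++ b ++ c ++ d := by
    simpa only [append_assoc] using infix_append a b (c ++ d)
  have hd : d <:+: a ++ b ++ c ++ d := (suffix_append _ _).isInfix
  rw [append_assoc _ b d] at h
  rcases infix_append_trichotomy hs h with h | h | h
  · exact .inl (h.trans habc)
  · rcases infix_append_trichotomy hs h with h | h | h
    · exact .inl (h.trans hb)
    · exact .inl (h.trans hd)
    · exact .inr (.inr h)
  · exact .inr (.inl h)

end List

theorem Set.ncard_le_ncard_add_card_of_subset_union {α : Type*} {s t : Set α} {A : Finset α}
    (ht : t.Finite) (h : s ⊆ t ∪ A) : s.ncard ≤ t.ncard + A.card :=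
  (Set.ncard_le_ncard h (ht.union A.finite_toSet)).trans <|
    (Set.ncard_union_le t A).trans_eq (by rw [Set.ncard_coe_finset])

open List in
theorem stmt4_general (q k : ℕ) (a b c d : List (Fin q))
    (x y : List (Fin q)) (hx : x = a ++ b ++ c ++ d) (hy : y = a ++ b ++ c ++ b ++ d) :
    Nat.card {s : List (Fin q) // s.length = k ∧ s <:+: y} - 2 * (k - 1)
      ≤ Nat.card {s : List (Fin q) // s.length = k ∧ s <:+: x} := by
  subst hx hy
  set A := crossingInfixes k (a ++ b ++ c) (b ++ d)
  set B := crossingInfixes k b d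
  have hsub : {s | s.length = k ∧ s <:+: a ++ b ++ c ++ b ++ d} ⊆
      {s | s.length = k ∧ s <:+: a ++ b ++ c ++ d} ∪ ↑(A ∪ B) := by
    rintro s ⟨hs, h⟩
    rcases infix_dedup_or_mem_crossingInfixes hs h with h | h | h
    · exact .inl ⟨hs, h⟩
    · exact .inr (Finset.mem_union_left B h)
    · exact .inr (Finset.mem_union_right A h)
  have hAB : (A ∪ B).card ≤ 2 * (k - 1) :=
    (Finset.card_union_le A B).trans <| by
      linarith [card_crossingInfixes_le k (a ++ b ++ c) (b ++ d), card_crossingInfixes_le k b d]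
  have hcard := Set.ncard_le_ncard_add_card_of_subset_union
    (finite_setOf_length_eq_infix k _) hsub
  rw [← Set.coe_ofPred, ← Set.coe_ofPred, Nat.card_coe_set_eq, Nat.card_coe_set_eq]
  omega

/-- a deduplication-with-transposition step decreases the number of
distinct length-`k` substrings by at most `2(k-1)`. -/
theorem stmt4 (q k : ℕ) (hk : 0 < k) (a b c d : List (Fin q)) (hb : b ≠ [])
    (x y : List (Fin q)) (hx : x = a ++ b ++ c ++ d) (hy : y = a ++ b ++ c ++ b ++ d) :
    Nat.card {s : List (Fin q) // s.length = k ∧ s <:+: y} - 2 * (k - 1)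
      ≤ Nat.card {s : List (Fin q) // s.length = k ∧ s <:+: x} :=
  stmt4_general q k a b c d x y hx hy
end

section
/- Let y be a q-ary string and k ≥ q+1 a positive integer. Then the duplication-with-transposition distance from the root of y to y satisfies f(y) ≥ N(y,k)/(2(k-1)), where N(y,k) is the number of distinct length-k substrings of y. -/
/-
Write the result of a duplication `a·b·c·d ↦ a·b·c·b·d` as `(a·b·c)·(b·d)` and cut `b·d` once
more. A length-`k` window that does not straddle one of these two cuts lies inside `a·b·c`, `b`
or `d`, hence is already a window of `a·b·c·d`; a window straddling a cut is determined by how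
many of its letters lie left of it, so there are at most `k - 1` of those per cut. Thus each
duplication creates at most `2(k - 1)` new windows, while the root has at most `q < k` letters and
no window at all. The root does reach `y`: appending a new letter to `y` appends it to the root,
and appending a repeated one is a duplication of length one.
-/
open scoped BigOperators

section Infixes

variable {α : Type*}

def infixesOfLength (k : ℕ) (l : List α) : Set (List α) :=
  {s | s.length = k ∧ s <:+: l}

theorem infixesOfLength_finite (k : ℕ) (l : List α) : (infixesOfLength k l).Finite :=
  l.sublists.finite_toSet.subset fun _ hs => List.mem_sublists.2 hs.2.sublist

theorem infixesOfLength_mono {k : ℕ} {l l' : List α} (h : l <:+: l') :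
    infixesOfLength k l ⊆ infixesOfLength k l' :=
  fun _ hs => ⟨hs.1, hs.2.trans h⟩

theorem infixesOfLength_eq_empty {k : ℕ} {l : List α} (h : l.length < k) :
    infixesOfLength k l = ∅ :=
  Set.eq_empty_of_forall_notMem fun _ ⟨hlen, hs⟩ => by
    have := hs.length_le
    omega

theorem exists_infixesOfLength_append_subset (k : ℕ) (u v : List α) :
    ∃ S : Finset (List α), S.card ≤ k - 1 ∧
      infixesOfLength k (u ++ v) ⊆ infixesOfLength k u ∪ infixesOfLength k v ∪ S := by
  classical
  refine ⟨(Finset.Ioo 0 k).image fun j => u.drop (u.length - j) ++ v.take (k - j),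
    Finset.card_image_le.trans (by simp), ?_⟩
  rintro s ⟨hlen, hs⟩
  rcases List.infix_append_iff_ne_nil.1 hs with hu | hv | ⟨s₁, s₂, h₁, h₂, rfl, hsuf, hpre⟩
  · exact Or.inl (Or.inl ⟨hlen, hu⟩)
  · exact Or.inl (Or.inr ⟨hlen, hv⟩)
  · right
    have hs₁ := List.length_pos_iff.2 h₁
    have hs₂ := List.length_pos_iff.2 h₂
    rw [List.length_append] at hlen
    simp only [Finset.coe_image, Finset.coe_Ioo, Set.mem_image, Set.mem_Ioo]
    refine ⟨s₁.length, ⟨hs₁, by omega⟩, ?_⟩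
    rw [List.suffix_iff_eq_drop.1 hsuf, List.prefix_iff_eq_take.1 hpre, List.length_drop,
      Nat.sub_sub_self hsuf.length_le, show k - s₁.length = s₂.length by omega]

end Infixes

variable {q : ℕ}

theorem ncard_infixesOfLength_le_of_dupStep (k : ℕ) {x y : List (Fin q)} (h : DupStep x y) :
    (infixesOfLength k y).ncard ≤ (infixesOfLength k x).ncard + 2 * (k - 1) := by
  obtain ⟨a, b, c, d, -, rfl, rfl⟩ := h
  obtain ⟨S₁, hS₁, h₁⟩ := exists_infixesOfLength_append_subset k (a ++ b ++ c) (b ++ d)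
  obtain ⟨S₂, hS₂, h₂⟩ := exists_infixesOfLength_append_subset k b d
  have hsub : infixesOfLength k (a ++ b ++ c ++ b ++ d) ⊆
      infixesOfLength k (a ++ b ++ c ++ d) ∪ ↑(S₁ ∪ S₂) := by
    have habc := infixesOfLength_mono (k := k)
      (List.infix_append_left (l₁ := a ++ b ++ c) (l₂ := d))
    have hb := infixesOfLength_mono (k := k) (List.infix_append a b (c ++ d))
    have hd := infixesOfLength_mono (k := k)
      (List.infix_append_right (l₁ := a ++ b ++ c) (l₂ := d))
    simp only [List.append_assoc] at h₁ habc hb hd ⊢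
    intro s hs
    simp only [Finset.coe_union, Set.mem_union] at h₁ h₂ ⊢
    rcases h₁ hs with (hs | hs) | hs
    · exact Or.inl (habc hs)
    · rcases h₂ hs with (hs | hs) | hs
      · exact Or.inl (hb hs)
      · exact Or.inl (hd hs)
      · exact Or.inr (Or.inr hs)
    · exact Or.inr (Or.inl hs)
  calc (infixesOfLength k (a ++ b ++ c ++ b ++ d)).ncard
      ≤ (infixesOfLength k (a ++ b ++ c ++ d) ∪ ↑(S₁ ∪ S₂)).ncard :=
        Set.ncard_le_ncard hsub ((infixesOfLength_finite _ _).union (Finset.finite_toSet _))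
    _ ≤ (infixesOfLength k (a ++ b ++ c ++ d)).ncard + (S₁ ∪ S₂).card := by
        rw [← Set.ncard_coe_finset (S₁ ∪ S₂)]
        exact Set.ncard_union_le _ _
    _ ≤ _ := by
        have := Finset.card_union_le S₁ S₂
        omega

theorem ncard_infixesOfLength_le_of_dupPath (k : ℕ) :
    ∀ {m : ℕ} {x y : List (Fin q)}, DupPath m x y →
      (infixesOfLength k y).ncard ≤ (infixesOfLength k x).ncard + 2 * (k - 1) * m
  | 0, _, _, h => by cases h; simp
  | m + 1, _, _, ⟨z, hxz, hzy⟩ => by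
    have := ncard_infixesOfLength_le_of_dupStep k hxz
    have := ncard_infixesOfLength_le_of_dupPath k hzy
    rw [Nat.mul_succ]
    omega

theorem DupStep.append_right {x y : List (Fin q)} (h : DupStep x y) (w : List (Fin q)) :
    DupStep (x ++ w) (y ++ w) := by
  obtain ⟨a, b, c, d, hb, rfl, rfl⟩ := h
  exact ⟨a, b, c, d ++ w, hb, by simp, by simp⟩

theorem DupPath.append_right (w : List (Fin q)) :
    ∀ {m : ℕ} {x y : List (Fin q)}, DupPath m x y → DupPath m (x ++ w) (y ++ w)
  | 0, _, _, h => congrArg (· ++ w) h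
  | _ + 1, _, _, ⟨z, hxz, hzy⟩ => ⟨z ++ w, hxz.append_right w, hzy.append_right w⟩

theorem DupPath.snoc :
    ∀ {m : ℕ} {x y z : List (Fin q)}, DupPath m x y → DupStep y z → DupPath (m + 1) x z
  | 0, _, _, _, h, hyz => ⟨_, h ▸ hyz, rfl⟩
  | _ + 1, _, _, _, ⟨w, hxw, hwy⟩, hyz => ⟨w, hxw, hwy.snoc hyz⟩

theorem dupStep_append_singleton {l : List (Fin q)} {a : Fin q} (h : a ∈ l) :
    DupStep l (l ++ [a]) := by
  obtain ⟨s, t, rfl⟩ := List.append_of_mem h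
  exact ⟨s, [a], t, [], List.cons_ne_nil a [], by simp, by simp⟩

theorem firstOccs_append_singleton (l : List (Fin q)) (a : Fin q) :
    firstOccs (l ++ [a]) = if a ∈ firstOccs l then firstOccs l else firstOccs l ++ [a] := by
  rw [firstOccs, List.foldl_append]
  rfl

theorem mem_firstOccs {l : List (Fin q)} {a : Fin q} : a ∈ firstOccs l ↔ a ∈ l := by
  induction l using List.reverseRecOn with
  | nil => simp [firstOccs]
  | append_singleton l b ih =>
    rw [firstOccs_append_singleton]
    split_ifs with hb
    · simp only [ih, List.mem_append, List.mem_singleton]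
      exact ⟨Or.inl, fun h => h.elim id fun hab => ih.1 (hab ▸ hb)⟩
    · simp [ih]

theorem nodup_firstOccs (l : List (Fin q)) : (firstOccs l).Nodup := by
  induction l using List.reverseRecOn with
  | nil => simp [firstOccs]
  | append_singleton l b ih =>
    rw [firstOccs_append_singleton]
    split_ifs with hb
    · exact ih
    · exact ih.append (List.nodup_singleton b) (by simpa using hb)

theorem length_firstOccs_le (l : List (Fin q)) : (firstOccs l).length ≤ q := by
  simpa using (nodup_firstOccs l).length_le_card

theorem exists_dupPath_firstOccs (y : List (Fin q)) : ∃ m, DupPath m (firstOccs y) y := by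
  induction y using List.reverseRecOn with
  | nil => exact ⟨0, rfl⟩
  | append_singleton l a ih =>
    obtain ⟨m, hm⟩ := ih
    rw [firstOccs_append_singleton]
    split_ifs with ha
    · exact ⟨m + 1, hm.snoc (dupStep_append_singleton (mem_firstOccs.1 ha))⟩
    · exact ⟨m, hm.append_right [a]⟩

theorem stmt5_general (q k : ℕ) (hk : q + 1 ≤ k) (y : List (Fin q)) :
    ((Nat.card {s : List (Fin q) // s.length = k ∧ s <:+: y} : ℕ) : ℝ) / (2 * ((k : ℝ) - 1))
      ≤ ((sInf {m : ℕ | DupPath m (firstOccs y) y} : ℕ) : ℝ) := by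
  set m := sInf {m : ℕ | DupPath m (firstOccs y) y}
  have hpath : DupPath m (firstOccs y) y := Nat.sInf_mem (exists_dupPath_firstOccs y)
  have hroot : infixesOfLength k (firstOccs y) = ∅ :=
    infixesOfLength_eq_empty ((length_firstOccs_le y).trans_lt hk)
  have hcount : (infixesOfLength k y).ncard ≤ 2 * (k - 1) * m := by
    simpa [hroot] using ncard_infixesOfLength_le_of_dupPath k hpath
  have hk₁ : (1 : ℝ) ≤ k := by exact_mod_cast (by omega : 1 ≤ k)
  rw [show Nat.card {s : List (Fin q) // s.length = k ∧ s <:+: y}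
      = (infixesOfLength k y).ncard from Nat.card_coe_set_eq _]
  refine div_le_of_le_mul₀ (by linarith) (Nat.cast_nonneg _) ?_
  calc ((infixesOfLength k y).ncard : ℝ) ≤ ((2 * (k - 1) * m : ℕ) : ℝ) := mod_cast hcount
    _ = m * (2 * ((k : ℝ) - 1)) := by
        push_cast [Nat.cast_sub (by omega : 1 ≤ k)]
        ring

/-- the duplication-with-transposition distance from the root to `y`
is at least `N(y,k)/(2(k-1))` for `k ≥ q+1`. -/
theorem stmt5 (q k : ℕ) (hq : 1 ≤ q) (hk : q + 1 ≤ k) (y : List (Fin q)) (hy : y ≠ []) :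
    ((Nat.card {s : List (Fin q) // s.length = k ∧ s <:+: y} : ℕ) : ℝ) / (2 * ((k : ℝ) - 1))
      ≤ ((sInf {m : ℕ | DupPath m (firstOccs y) y} : ℕ) : ℝ) :=
  stmt5_general q k hk y
end

section
/- Fix β with (q-1)/q < β ≤ 1 and let c = ceil(βq/(βq - (q-1))). Then any q-ary string v of length n ≥ c·c (so that blocks are non-trivial) has a parent in the β-approximate duplication graph of length at most n - floor(n/c); more precisely, v can be written as v = a·b·c'·b̂·d with |b| = |b̂| = floor(n/c) and d_H(b,b̂) ≤ β|b|. -/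
open scoped BigOperators

/-!
Cut `v` into `c` consecutive blocks of length `k = ⌊n/c⌋`. Counting, coordinate by coordinate,
the pairs of blocks that agree and applying Cauchy–Schwarz to the symbol frequencies gives
Plotkin's averaging bound: the mean Hamming distance between two distinct blocks is at most
`k (q-1) c / (q (c-1))`, which the choice of `c` makes at most `β k`. Two blocks at distance at
most `β k`, the earlier one `b` and the later one `b̂`, give the factorisation
`v = a·b·c'·b̂·d`.
-/

open Finset

section Plotkin

variable {ι κ α : Type*} [Fintype ι] [Fintype κ] [Fintype α] [DecidableEq α]

theorem card_sq_le_card_mul_card_collisions (g : κ → α) :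
    Fintype.card κ ^ 2 ≤ Fintype.card α * #{p : κ × κ | g p.1 = g p.2} := by
  have hfibres : #{p : κ × κ | g p.1 = g p.2} = ∑ a, #{i | g i = a} ^ 2 := by
    rw [card_eq_sum_card_fiberwise (f := fun p => g p.1) (t := univ) (by simp)]
    refine sum_congr rfl fun a _ => ?_
    rw [sq, ← card_product]
    congr 1
    ext ⟨i, j⟩
    simp only [mem_filter, mem_univ, true_and, mem_product]
    constructor
    · rintro ⟨hij, rfl⟩; exact ⟨rfl, hij.symm⟩
    · rintro ⟨rfl, hj⟩; exact ⟨hj.symm, rfl⟩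
  rw [hfibres, ← card_univ, card_eq_sum_card_fiberwise (f := g) (t := univ) (by simp)]
  exact sq_sum_le_card_mul_sum_sq

theorem card_mul_sum_hammingDist_add_le (x : κ → ι → α) :
    Fintype.card α * ∑ p : κ × κ, hammingDist (x p.1) (x p.2) +
        Fintype.card ι * Fintype.card κ ^ 2 ≤
      Fintype.card α * Fintype.card ι * Fintype.card κ ^ 2 := by
  have hswap : ∑ p : κ × κ, hammingDist (x p.1) (x p.2) =
      ∑ t : ι, #{p : κ × κ | x p.1 t ≠ x p.2 t} := by
    simp only [hammingDist, card_filter]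
    exact sum_comm
  have hcoord : ∀ t : ι, Fintype.card α * #{p : κ × κ | x p.1 t ≠ x p.2 t} +
      Fintype.card κ ^ 2 ≤ Fintype.card α * Fintype.card κ ^ 2 := by
    intro t
    have hsplit := card_filter_add_card_filter_not (s := (univ : Finset (κ × κ)))
      (fun p => x p.1 t = x p.2 t)
    rw [card_univ, Fintype.card_prod, ← sq] at hsplit
    have := card_sq_le_card_mul_card_collisions (fun i => x i t)
    nlinarith
  calc _ = ∑ t : ι, (Fintype.card α * #{p : κ × κ | x p.1 t ≠ x p.2 t} +
        Fintype.card κ ^ 2) := by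
        rw [hswap, mul_sum, sum_add_distrib, sum_const, card_univ, smul_eq_mul]
    _ ≤ ∑ _t : ι, Fintype.card α * Fintype.card κ ^ 2 := sum_le_sum fun t _ => hcoord t
    _ = _ := by rw [sum_const, card_univ, smul_eq_mul]; ring

theorem exists_ne_hammingDist_le [Nonempty α] [Nontrivial κ] (x : κ → ι → α) {β : ℝ}
    (hβ : (Fintype.card κ : ℝ) * (Fintype.card α - 1) ≤
      Fintype.card α * β * (Fintype.card κ - 1)) :
    ∃ i j, i ≠ j ∧ (hammingDist (x i) (x j) : ℝ) ≤ β * Fintype.card ι := by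
  set c := Fintype.card κ
  set q := Fintype.card α
  set k := Fintype.card ι
  have hq : (0 : ℝ) < q := by exact_mod_cast Fintype.card_pos
  have hc : ((#(univ : Finset κ).offDiag : ℕ) : ℝ) = c * (c - 1) := by
    rw [offDiag_card, card_univ, Nat.cast_sub (Nat.le_mul_self c)]
    push_cast; ring
  have htotal :
      (q : ℝ) * ∑ p : κ × κ, (hammingDist (x p.1) (x p.2) : ℝ) ≤ k * c ^ 2 * (q - 1) := by
    have := card_mul_sum_hammingDist_add_le x
    rw [← Nat.cast_le (α := ℝ)] at this
    push_cast at this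
    linarith
  have hsum : ∑ p ∈ (univ : Finset κ).offDiag, (hammingDist (x p.1) (x p.2) : ℝ) ≤
      ∑ _p ∈ (univ : Finset κ).offDiag, β * k := by
    rw [sum_const, nsmul_eq_mul, hc]
    refine le_of_mul_le_mul_left ?_ hq
    calc _ ≤ (q : ℝ) * ∑ p : κ × κ, (hammingDist (x p.1) (x p.2) : ℝ) := by
          gcongr
          exact subset_univ _
      _ ≤ k * c ^ 2 * (q - 1) := htotal
      _ = k * c * (c * (q - 1)) := by ring
      _ ≤ k * c * (q * β * (c - 1)) := by gcongr
      _ = q * (c * (c - 1) * (β * k)) := by ring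
  obtain ⟨i₀, j₀, hne⟩ := exists_pair_ne κ
  obtain ⟨⟨i, j⟩, hij, hle⟩ :=
    exists_le_of_sum_le ⟨(i₀, j₀), mem_offDiag.2 ⟨mem_univ _, mem_univ _, hne⟩⟩ hsum
  exact ⟨i, j, (mem_offDiag.1 hij).2.2, hle⟩

end Plotkin

theorem listHammingDist_ofFn {q : ℕ} : ∀ {k : ℕ} (f g : Fin k → Fin q),
    listHammingDist (List.ofFn f) (List.ofFn g) = hammingDist f g
  | 0, _, _ => by simp [listHammingDist, hammingDist]
  | k + 1, f, g => by
    have ih := listHammingDist_ofFn (fun i => f i.succ) (fun i => g i.succ)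
    simp only [listHammingDist, hammingDist, card_filter] at ih ⊢
    rw [List.ofFn_succ, List.ofFn_succ, List.zip_cons_cons, List.filter_cons, Fin.sum_univ_succ,
      ← ih]
    by_cases h : f 0 = g 0 <;> simp [h, add_comm]

theorem List.take_drop_eq_ofFn {α : Type*} (v : List α) {m k : ℕ} (h : m + k ≤ v.length) :
    (v.drop m).take k = List.ofFn fun p : Fin k => v[m + p] :=
  List.ext_getElem (by simp only [List.length_take, List.length_drop, List.length_ofFn]; omega)
    fun p _ _ => by simp

theorem List.exists_eq_append_take_drop {α : Type*} (v : List α) {m m' k : ℕ}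
    (h : m + k ≤ m') :
    ∃ a c d, v = a ++ (v.drop m).take k ++ c ++ (v.drop m').take k ++ d := by
  have hdrop : ∀ i j, v.drop i = (v.drop i).take j ++ v.drop (i + j) := fun i j => by
    rw [← List.drop_drop, List.take_append_drop]
  obtain ⟨t, rfl⟩ := Nat.exists_eq_add_of_le h
  refine ⟨v.take m, (v.drop (m + k)).take t, v.drop (m + k + t + k), ?_⟩
  conv_lhs => rw [← List.take_append_drop m v, hdrop m k, hdrop (m + k) t, hdrop (m + k + t) k]
  simp only [List.append_assoc]

theorem two_le_and_plotkin_of_eq_ceil {q c : ℕ} {β : ℝ} (hq : 2 ≤ q)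
    (hβ : ((q : ℝ) - 1) / q < β) (hc : c = ⌈β * q / (β * q - ((q : ℝ) - 1))⌉₊) :
    2 ≤ c ∧ (c : ℝ) * (q - 1) ≤ q * β * (c - 1) := by
  have hq' : (2 : ℝ) ≤ q := by exact_mod_cast hq
  have hden : 0 < β * q - (q - 1) := by
    have := (div_lt_iff₀ (by positivity)).mp hβ
    linarith
  have hceil : β * q ≤ c * (β * q - (q - 1)) :=
    (div_le_iff₀ hden).mp (hc ▸ Nat.le_ceil _)
  refine ⟨?_, by linarith⟩
  by_contra! hc1
  have : (c : ℝ) ≤ 1 := by exact_mod_cast Nat.le_of_lt_succ hc1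
  nlinarith

theorem stmt9_general (q n : ℕ) (hq : 2 ≤ q) (β : ℝ)
    (hβ1 : ((q : ℝ) - 1) / q < β)
    (c : ℕ) (hc : c = ⌈β * q / (β * q - ((q : ℝ) - 1))⌉₊)
    (v : List (Fin q)) (hv : v.length = n) :
    ∃ a b c' bh d : List (Fin q), v = a ++ b ++ c' ++ bh ++ d ∧
      b.length = n / c ∧ bh.length = n / c ∧
      (listHammingDist b bh : ℝ) ≤ β * (b.length : ℝ) := by
  obtain ⟨hc2, hcq⟩ := two_le_and_plotkin_of_eq_ceil hq hβ1 hc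
  have : NeZero q := ⟨by omega⟩
  have : Nontrivial (Fin c) := Fin.nontrivial_iff_two_le.2 hc2
  set k := n / c
  have hblock : ∀ i : Fin c, (i : ℕ) * k + k ≤ v.length := fun i =>
    calc (i : ℕ) * k + k = (i + 1) * k := by ring
      _ ≤ c * k := Nat.mul_le_mul_right k i.2
      _ ≤ v.length := hv ▸ Nat.mul_div_le n c
  let blocks : Fin c → Fin k → Fin q := fun i p =>
    v[(i : ℕ) * k + p]'(by have := hblock i; omega)
  obtain ⟨i, j, hij, hdist⟩ := exists_ne_hammingDist_le blocks (by simpa using hcq)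
  wlog hlt : i < j generalizing i j
  · exact this j i hij.symm (by rwa [hammingDist_comm]) (hij.symm.lt_of_le (not_lt.1 hlt))
  obtain ⟨a, c', d, hsplit⟩ := v.exists_eq_append_take_drop (m := i * k) (m' := j * k) (k := k)
    (by simpa [add_mul] using Nat.mul_le_mul_right k (Fin.lt_def.1 hlt))
  refine ⟨a, _, c', _, d, hsplit, ?_, ?_, ?_⟩
  · simp only [List.length_take, List.length_drop]; have := hblock i; omega
  · simp only [List.length_take, List.length_drop]; have := hblock j; omega
  · rw [v.take_drop_eq_ofFn (hblock i), v.take_drop_eq_ofFn (hblock j), listHammingDist_ofFn,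
      List.length_ofFn]
    simpa using hdist

/-- for `(q-1)/q < β ≤ 1` and `c = ⌈βq/(βq-(q-1))⌉`, every string of
length `n ≥ c²` splits as `a·b·c'·b̂·d` with `|b| = |b̂| = ⌊n/c⌋` and
`d_H(b,b̂) ≤ β|b|`; hence it has a parent of length at most `n - ⌊n/c⌋`. -/
theorem stmt9 (q n : ℕ) (hq : 2 ≤ q) (β : ℝ)
    (hβ1 : ((q : ℝ) - 1) / q < β) (hβ2 : β ≤ 1)
    (c : ℕ) (hc : c = ⌈β * q / (β * q - ((q : ℝ) - 1))⌉₊)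
    (v : List (Fin q)) (hv : v.length = n) (hn : c * c ≤ n) :
    ∃ a b c' bh d : List (Fin q), v = a ++ b ++ c' ++ bh ++ d ∧
      b.length = n / c ∧ bh.length = n / c ∧
      (listHammingDist b bh : ℝ) ≤ β * (b.length : ℝ) :=
  stmt9_general q n hq β hβ1 c hc v hv
end

section
/- For fixed q ≥ 2 and β with (q-1)/q < β ≤ 1, the maximal β-approximate duplication distance to the root satisfies f_β(n) ≤ c + 1 + log_{q'} n for all n, where c = ceil(βq/(βq-(q-1))) and q' = (c+1)/c. -/
open scoped BigOperators
open Finset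

lemma hd_cons {q : ℕ} (a b : Fin q) (u v : List (Fin q)) :
    listHammingDist (a::u) (b::v) = (if a = b then 0 else 1) + listHammingDist u v := by
  simp only [listHammingDist, List.zip_cons_cons, List.filter_cons]
  by_cases h : a = b <;> simp [h, Nat.add_comm]

lemma hd_self {q : ℕ} (l : List (Fin q)) : listHammingDist l l = 0 := by
  induction l with
  | nil => rfl
  | cons a t ih => rw [hd_cons, ih]; simp

lemma hd_symm {q : ℕ} (u v : List (Fin q)) : listHammingDist u v = listHammingDist v u := by
  induction u generalizing v with
  | nil => cases v <;> rfl
  | cons a t ih => cases v with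
    | nil => rfl
    | cons b s => rw [hd_cons, hd_cons, ih]; by_cases h : a = b <;> simp [h, eq_comm]

lemma cauchy_count {q t : ℕ} (hq : 0 < q) (f : ℕ → Fin q) :
    t * t ≤ q * ∑ p ∈ range t ×ˢ range t, (if f p.1 = f p.2 then 1 else 0) := by
  classical
  set n : Fin q → ℕ := fun a => #((range t).filter fun i => f i = a) with hn
  have hcard : t = ∑ a : Fin q, n a := by
    simpa using Finset.card_eq_sum_card_fiberwise
      (f := f) (s := range t) (t := Finset.univ) (fun x _ => mem_univ _)
  have hsum : ∑ p ∈ range t ×ˢ range t, (if f p.1 = f p.2 then 1 else 0)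
      = ∑ a : Fin q, n a * n a := by
    rw [Finset.sum_product]
    have h1 : ∀ i ∈ range t, (∑ j ∈ range t, if f i = f j then 1 else 0) = n (f i) := by
      intro i _
      simp only [hn, Finset.card_filter]
      exact Finset.sum_congr rfl (fun j _ => by by_cases h : f i = f j <;> simp [h, eq_comm])
    rw [Finset.sum_congr rfl h1,
      ← Finset.sum_fiberwise_of_maps_to' (g := f) (t := Finset.univ)
        (fun x _ => mem_univ _) (f := n)]
    refine Finset.sum_congr rfl (fun a _ => ?_)
    rw [Finset.sum_const]
    simp [hn, mul_comm]
  rw [hsum]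
  have h2 := sq_sum_le_card_mul_sum_sq (s := (Finset.univ : Finset (Fin q))) (f := n)
  calc t * t = (∑ a : Fin q, n a) ^ 2 := by rw [← hcard]; ring
    _ ≤ q * ∑ a : Fin q, n a ^ 2 := by simpa using h2
    _ = q * ∑ a : Fin q, n a * n a := by simp [sq]

lemma neq_pairs {q t : ℕ} (hq : 0 < q) (f : ℕ → Fin q) :
    q * ∑ p ∈ range t ×ˢ range t, (if f p.1 = f p.2 then 0 else 1) ≤ (q-1) * (t*t) := by
  classical
  have hsplit : (∑ p ∈ range t ×ˢ range t, (if f p.1 = f p.2 then 0 else 1))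
      + ∑ p ∈ range t ×ˢ range t, (if f p.1 = f p.2 then 1 else 0) = t * t := by
    rw [← Finset.sum_add_distrib]
    have h0 : ∑ p ∈ range t ×ˢ range t,
        ((if f p.1 = f p.2 then 0 else 1) + (if f p.1 = f p.2 then 1 else 0))
        = ∑ _p ∈ range t ×ˢ range t, 1 :=
      Finset.sum_congr rfl (fun p _ => by by_cases h : f p.1 = f p.2 <;> simp [h])
    rw [h0]
    simp [Finset.sum_const, Finset.card_product]
  have hC := cauchy_count (t := t) hq f
  set E := ∑ p ∈ range t ×ˢ range t, (if f p.1 = f p.2 then 1 else 0) with hE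
  set N := ∑ p ∈ range t ×ˢ range t, (if f p.1 = f p.2 then 0 else 1) with hN
  have h1 : N = t * t - E := by omega
  calc q * N = q * (t*t) - q * E := by rw [h1, Nat.mul_sub]
    _ ≤ q * (t*t) - t*t := Nat.sub_le_sub_left hC _
    _ = (q-1) * (t*t) := by rw [Nat.sub_one_mul]

lemma blocks {q : ℕ} (hq : 0 < q) (t : ℕ) : ∀ (k : ℕ) (B : ℕ → List (Fin q)),
    (∀ i, i < t → (B i).length = k) →
    q * ∑ p ∈ range t ×ˢ range t, listHammingDist (B p.1) (B p.2) ≤ (q-1) * (t*t) * k := by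
  intro k
  induction k with
  | zero =>
    intro B hB
    have : ∀ p ∈ range t ×ˢ range t, listHammingDist (B p.1) (B p.2) = 0 := by
      rintro ⟨i, j⟩ hp
      simp only [Finset.mem_product, Finset.mem_range] at hp
      have hi := hB i hp.1
      have : B i = [] := List.length_eq_zero_iff.1 hi
      simp [this, listHammingDist]
    rw [Finset.sum_congr rfl this]
    simp
  | succ k ih =>
    intro B hB
    have d0 : Fin q := ⟨0, hq⟩
    have hne : ∀ i, i < t → B i = (B i).headD d0 :: (B i).tail := by
      intro i hi
      have := hB i hi
      cases h : B i with
      | nil => rw [h] at this; simp at this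
      | cons a l => simp
    have hdec : ∀ p ∈ range t ×ˢ range t, listHammingDist (B p.1) (B p.2)
        = (if (B p.1).headD d0 = (B p.2).headD d0 then 0 else 1)
          + listHammingDist (B p.1).tail (B p.2).tail := by
      rintro ⟨i, j⟩ hp
      simp only [Finset.mem_product, Finset.mem_range] at hp
      conv_lhs => rw [hne i hp.1, hne j hp.2]
      exact hd_cons _ _ _ _
    rw [Finset.sum_congr rfl hdec, Finset.sum_add_distrib, Nat.mul_add]
    have h1 := neq_pairs (t := t) hq (fun i => (B i).headD d0)
    have h2 := ih (fun i => (B i).tail) (by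
      intro i hi
      have := hB i hi
      have h3 := hne i hi
      rw [h3] at this
      simpa using this)
    calc _ ≤ (q-1)*(t*t) + (q-1)*(t*t)*k := Nat.add_le_add h1 h2
      _ = (q-1)*(t*t)*(k+1) := by ring

lemma exists_parent {q : ℕ} (hq : 2 ≤ q) {β : ℝ} {c : ℕ} (hc1 : 1 ≤ c)
    (hkey : ((c : ℝ) + 1) * ((q : ℝ) - 1) ≤ β * q * c)
    (w : List (Fin q)) (hw : c + 1 ≤ w.length) :
    ∃ u : List (Fin q), ApproxStep β u w ∧ u.length + w.length / (c+1) = w.length := by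
  classical
  set ℓ := w.length with hℓ
  set k := ℓ / (c+1) with hk
  have hk1 : 1 ≤ k := (Nat.one_le_div_iff (by omega)).2 hw
  have hKle : (c+1) * k ≤ ℓ := by
    calc (c+1) * k = k * (c+1) := mul_comm _ _
      _ ≤ ℓ := Nat.div_mul_le_self ℓ (c+1)
  -- blocks
  set B : ℕ → List (Fin q) := fun i => (w.drop (i*k)).take k with hBdef
  have hik : ∀ i, i < c+1 → i*k + k ≤ ℓ := by
    intro i hi
    have : (i+1) * k ≤ (c+1) * k := Nat.mul_le_mul_right k hi
    calc i*k + k = (i+1)*k := by ring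
      _ ≤ (c+1)*k := this
      _ ≤ ℓ := hKle
  have hB : ∀ i, i < c+1 → (B i).length = k := by
    intro i hi
    have h1 := hik i hi
    simp only [hBdef, List.length_take, List.length_drop]
    omega
  have hqS := blocks (q := q) (by omega) (c+1) k B hB
  -- min over offDiag
  set D := (Finset.range (c+1)).offDiag with hD
  have hDcard : D.card = (c+1) * c := by
    rw [hD, Finset.offDiag_card, Finset.card_range]
    have : (c+1)*(c+1) = (c+1)*c + (c+1) := by ring
    omega
  have hDne : D.Nonempty := ⟨(0, 1), by
    simp [hD, Finset.mem_offDiag]; omega⟩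
  obtain ⟨p, hp, hmin⟩ := Finset.exists_min_image D
    (fun p => listHammingDist (B p.1) (B p.2)) hDne
  have hsub : D ⊆ range (c+1) ×ˢ range (c+1) := by
    intro x hx
    simp only [hD, Finset.mem_offDiag] at hx
    simp [Finset.mem_product, hx.1, hx.2.1]
  have hDS : D.card * listHammingDist (B p.1) (B p.2)
      ≤ ∑ x ∈ range (c+1) ×ˢ range (c+1), listHammingDist (B x.1) (B x.2) := by
    calc D.card * listHammingDist (B p.1) (B p.2)
        = ∑ _x ∈ D, listHammingDist (B p.1) (B p.2) := by rw [Finset.sum_const]; ring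
      _ ≤ ∑ x ∈ D, listHammingDist (B x.1) (B x.2) := Finset.sum_le_sum (fun x hx => hmin x hx)
      _ ≤ _ := Finset.sum_le_sum_of_subset hsub
  -- the Hamming bound, in ℝ
  have hmain : (listHammingDist (B p.1) (B p.2) : ℝ) ≤ β * k := by
    have h1 : q * ((c+1) * c * listHammingDist (B p.1) (B p.2))
        ≤ (q-1) * ((c+1)*(c+1)) * k := by
      calc q * ((c+1) * c * listHammingDist (B p.1) (B p.2))
          = q * (D.card * listHammingDist (B p.1) (B p.2)) := by rw [hDcard]
        _ ≤ q * ∑ x ∈ range (c+1) ×ˢ range (c+1), listHammingDist (B x.1) (B x.2) :=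
            Nat.mul_le_mul_left q hDS
        _ ≤ (q-1) * ((c+1)*(c+1)) * k := hqS
    have h2 : ((q : ℝ)) * ((c+1) * c * listHammingDist (B p.1) (B p.2))
        ≤ ((q : ℝ)-1) * ((c+1)*(c+1)) * k := by
      have := (Nat.cast_le (α := ℝ)).2 h1
      push_cast at this
      have hq1 : ((q-1 : ℕ) : ℝ) = (q : ℝ) - 1 := by
        have : (1:ℕ) ≤ q := by omega
        push_cast [Nat.cast_sub this]
        ring
      push_cast [hq1] at this ⊢
      convert this using 1 <;> ring
    -- divide
    have hc0 : (0:ℝ) < c := by exact_mod_cast hc1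
    have hq0 : (0:ℝ) < q := by positivity
    have hcc : (0:ℝ) < (c:ℝ)+1 := by linarith
    set dR : ℝ := (listHammingDist (B p.1) (B p.2) : ℝ) with hdR
    have hdnn : 0 ≤ dR := Nat.cast_nonneg _
    have hknn : (0:ℝ) ≤ (k:ℝ) := Nat.cast_nonneg _
    have h3 : (q:ℝ)*(c:ℝ)*dR ≤ ((q:ℝ)-1)*((c:ℝ)+1)*(k:ℝ) := by nlinarith [h2, hcc]
    have h4 : ((q:ℝ)-1)*((c:ℝ)+1)*(k:ℝ) ≤ β*(q:ℝ)*(c:ℝ)*(k:ℝ) := by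
      nlinarith [mul_le_mul_of_nonneg_right hkey hknn]
    have h5 : ((q:ℝ)*(c:ℝ))*dR ≤ ((q:ℝ)*(c:ℝ))*(β*(k:ℝ)) := by nlinarith [h3, h4]
    exact le_of_mul_le_mul_left h5 (mul_pos hq0 hc0)
  obtain ⟨i, j, hij, hjc, hdij⟩ : ∃ i j, i < j ∧ j < c+1 ∧
      (listHammingDist (B i) (B j) : ℝ) ≤ β * k := by
    have hp' := hp
    simp only [hD, Finset.mem_offDiag, Finset.mem_range] at hp'
    rcases lt_or_gt_of_ne hp'.2.2 with h | h
    · exact ⟨p.1, p.2, h, hp'.2.1, hmain⟩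
    · exact ⟨p.2, p.1, h, hp'.1, by rw [hd_symm]; exact hmain⟩
  set a := w.take (i*k) with ha
  set cm := (w.drop (i*k+k)).take (j*k - (i*k+k)) with hcm
  set dd := w.drop (j*k+k) with hdd
  have hiik : i*k + k ≤ j*k := by
    have h6 : (i+1)*k ≤ j*k := Nat.mul_le_mul_right k hij
    calc i*k + k = (i+1)*k := by ring
      _ ≤ j*k := h6
  have hweq : w = a ++ B i ++ cm ++ B j ++ dd := by
    have e1 : w = a ++ w.drop (i*k) := (List.take_append_drop _ w).symm
    have e2 : w.drop (i*k) = B i ++ w.drop (i*k+k) := by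
      conv_lhs => rw [← List.take_append_drop k (w.drop (i*k))]
      rw [List.drop_drop, hBdef]
    have e3 : w.drop (i*k+k) = cm ++ w.drop (j*k) := by
      conv_lhs => rw [← List.take_append_drop (j*k - (i*k+k)) (w.drop (i*k+k))]
      rw [List.drop_drop, Nat.add_sub_cancel' hiik, hcm]
    have e4 : w.drop (j*k) = B j ++ dd := by
      conv_lhs => rw [← List.take_append_drop k (w.drop (j*k))]
      rw [List.drop_drop, hBdef, hdd]
    rw [e1, e2, e3, e4]
    simp only [List.append_assoc]
  refine ⟨a ++ B i ++ cm ++ dd, ⟨a, B i, cm, B j, dd, ?_, ?_, ?_, rfl, hweq⟩, ?_⟩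
  · have := hB i (lt_trans hij hjc)
    intro hnil
    rw [hnil] at this
    simp at this
    omega
  · rw [hB i (lt_trans hij hjc), hB j hjc]
  · rw [hB i (lt_trans hij hjc)]
    exact hdij
  · have hlen := congrArg List.length hweq
    simp only [List.length_append] at hlen
    have hBj := hB j hjc
    simp only [List.length_append]
    omega

lemma approxPath_snoc {q : ℕ} {β : ℝ} : ∀ {m : ℕ} {x y z : List (Fin q)},
    ApproxPath β m x y → ApproxStep β y z → ApproxPath β (m+1) x z := by
  intro m
  induction m with
  | zero => intro x y z h hs; exact ⟨z, h ▸ hs, rfl⟩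
  | succ n ih =>
    rintro x y z ⟨w, hw, hp⟩ hs
    exact ⟨w, hw, ih hp hs⟩

lemma exists_dup_decomp {q : ℕ} : ∀ {l : List (Fin q)}, ¬ l.Nodup →
    ∃ (a cmid d : List (Fin q)) (x : Fin q), l = a ++ [x] ++ cmid ++ [x] ++ d := by
  intro l
  induction l with
  | nil => intro h; exact absurd List.nodup_nil h
  | cons hd t ih =>
    intro h
    rw [List.nodup_cons] at h
    push_neg at h
    by_cases hm : hd ∈ t
    · obtain ⟨s, u, hsu⟩ := List.append_of_mem hm
      exact ⟨[], s, u, hd, by simp [hsu]⟩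
    · obtain ⟨a, cmid, d, x, hx⟩ := ih (h hm)
      exact ⟨hd :: a, cmid, d, x, by simp [hx]⟩

lemma unit_parent {q : ℕ} {β : ℝ} (hβ0 : 0 ≤ β) {v : List (Fin q)} (h : ¬ v.Nodup) :
    ∃ u : List (Fin q), ApproxStep β u v ∧ u.length + 1 = v.length := by
  obtain ⟨a, cmid, d, x, hx⟩ := exists_dup_decomp h
  refine ⟨a ++ [x] ++ cmid ++ d, ⟨a, [x], cmid, [x], d, by simp, rfl, ?_, rfl, hx⟩, ?_⟩
  · simp [listHammingDist]
    linarith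
  · rw [hx]; simp; omega

lemma main_ind {q : ℕ} (hq : 2 ≤ q) {β : ℝ} (hβ0 : 0 ≤ β) {c : ℕ} (hc1 : 1 ≤ c)
    (hkey : ((c : ℝ) + 1) * ((q : ℝ) - 1) ≤ β * q * c) :
    ∀ ℓ : ℕ, ∀ v : List (Fin q), v.length = ℓ → v ≠ [] →
    ∃ (m : ℕ) (r : List (Fin q)), r ≠ [] ∧ r.Nodup ∧ ApproxPath β m r v ∧
      (m : ℝ) ≤ ((min ℓ (c+1) : ℕ) : ℝ) - 1
        + Real.logb (((c:ℝ)+1)/c) (max 1 ((ℓ:ℝ) - c)) := by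
  have hc0 : (0:ℝ) < c := by exact_mod_cast hc1
  have hb : (1:ℝ) < ((c:ℝ)+1)/c := (one_lt_div hc0).2 (by linarith)
  set b0 : ℝ := ((c:ℝ)+1)/c with hb0
  intro ℓ
  induction ℓ using Nat.strong_induction_on with
  | _ ℓ IH =>
    intro v hvl hvne
    have hℓ1 : 1 ≤ ℓ := hvl ▸ List.length_pos_iff.2 hvne
    have hlog0 : ∀ x : ℝ, 0 ≤ Real.logb b0 (max 1 x) :=
      fun x => Real.logb_nonneg hb (le_max_left _ _)
    by_cases hnd : v.Nodup
    · refine ⟨0, v, hvne, hnd, rfl, ?_⟩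
      have h1 : (1:ℝ) ≤ ((min ℓ (c+1) : ℕ) : ℝ) := by
        have : 1 ≤ min ℓ (c+1) := le_min hℓ1 (by omega)
        exact_mod_cast this
      have := hlog0 ((ℓ:ℝ) - c)
      simp only [Nat.cast_zero]
      linarith
    · by_cases hsmall : ℓ ≤ c
      · -- unit step
        obtain ⟨u, hstep, hul⟩ := unit_parent hβ0 hnd
        have hune : u ≠ [] := by
          intro h
          rw [h] at hul
          simp at hul
          have hv1 : v.length = 1 := by omega
          obtain ⟨x, hx⟩ := List.length_eq_one_iff.1 hv1
          exact hnd (hx ▸ List.nodup_singleton x)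
        have hul' : u.length = ℓ - 1 := by omega
        obtain ⟨m', r, hr1, hr2, hr3, hr4⟩ := IH (ℓ-1) (by omega) u hul' hune
        refine ⟨m'+1, r, hr1, hr2, approxPath_snoc hr3 hstep, ?_⟩
        have hℓ2 : 2 ≤ ℓ := by
          by_contra h
          have hv1 : v.length = 1 := by omega
          obtain ⟨x, hx⟩ := List.length_eq_one_iff.1 hv1
          exact hnd (hx ▸ List.nodup_singleton x)
        have e1 : min (ℓ-1) (c+1) = ℓ-1 := by omega
        have e2 : min ℓ (c+1) = ℓ := by omega
        have e3 : max 1 ((↑(ℓ-1):ℝ) - c) = 1 := by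
          have : ((ℓ-1:ℕ):ℝ) = (ℓ:ℝ) - 1 := by
            push_cast [Nat.cast_sub hℓ1]; ring
          rw [this]
          have hcℓ : (ℓ:ℝ) ≤ c := by exact_mod_cast hsmall
          apply max_eq_left
          linarith
        rw [e1, e3, Real.logb_one] at hr4
        rw [e2]
        have h4 : ((ℓ-1:ℕ):ℝ) = (ℓ:ℝ) - 1 := by push_cast [Nat.cast_sub hℓ1]; ring
        rw [h4] at hr4
        have := hlog0 ((ℓ:ℝ) - c)
        push_cast
        linarith
      · -- geometric step
        push_neg at hsmall
        have hwc : c + 1 ≤ v.length := by omega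
        obtain ⟨u, hstep, hul⟩ := exists_parent hq hc1 hkey v hwc
        set k := v.length / (c+1) with hk
        have hk1 : 1 ≤ k := (Nat.one_le_div_iff (by omega)).2 hwc
        have hKle : (c+1) * k ≤ ℓ := by
          calc (c+1) * k = k * (c+1) := mul_comm _ _
            _ ≤ v.length := Nat.div_mul_le_self _ _
            _ = ℓ := hvl
        have hdm : (c+1)*k + v.length % (c+1) = v.length := Nat.div_add_mod _ _
        have hmod : v.length % (c+1) ≤ c := Nat.lt_succ_iff.mp (Nat.mod_lt _ (by omega))
        have hKge : ℓ ≤ (c+1)*k + c := by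
          calc ℓ = v.length := hvl.symm
            _ = (c+1)*k + v.length % (c+1) := hdm.symm
            _ ≤ (c+1)*k + c := Nat.add_le_add_left hmod _
        have h2k : 2*k ≤ ℓ := le_trans (Nat.mul_le_mul_right k (by omega)) hKle
        have hkℓ : k < ℓ := by omega
        have hul' : u.length = ℓ - k := by omega
        have hune : u ≠ [] := by
          intro h
          rw [h] at hul'
          simp at hul'
          omega
        obtain ⟨m', r, hr1, hr2, hr3, hr4⟩ := IH (ℓ-k) (by omega) u hul' hune
        refine ⟨m'+1, r, hr1, hr2, approxPath_snoc hr3 hstep, ?_⟩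
        have hminle : ((min (ℓ-k) (c+1) : ℕ) : ℝ) ≤ (c:ℝ)+1 := by
          have : min (ℓ-k) (c+1) ≤ c+1 := min_le_right _ _
          exact_mod_cast this
        rcases eq_or_lt_of_le hwc with heq | hlt
        · -- ℓ = c+1
          have hℓeq : ℓ = c + 1 := by omega
          have hkeq : k = 1 := by
            rw [hk, hvl, hℓeq, Nat.div_self (by omega)]
          have e2 : min ℓ (c+1) = c+1 := by omega
          have e5 : min (ℓ-k) (c+1) = c := by omega
          have e6 : max 1 ((↑(ℓ-k):ℝ) - c) = 1 := by
            have : ((ℓ-k:ℕ):ℝ) = (c:ℝ) := by rw [hℓeq, hkeq]; push_cast; ring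
            rw [this]
            apply max_eq_left; linarith
          rw [e5, e6, Real.logb_one] at hr4
          rw [e2]
          have e7 : max 1 ((ℓ:ℝ) - c) = 1 := by
            have : (ℓ:ℝ) = (c:ℝ)+1 := by exact_mod_cast congrArg (Nat.cast (R := ℝ)) hℓeq
            rw [this]; apply max_eq_left; linarith
          rw [e7, Real.logb_one]
          push_cast
          linarith
        · -- ℓ ≥ c+2
          have hℓc2 : c + 2 ≤ ℓ := by omega
          have e2 : min ℓ (c+1) = c+1 := by omega
          have hcast : ((ℓ-k:ℕ):ℝ) = (ℓ:ℝ) - k := by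
            push_cast [Nat.cast_sub (le_of_lt hkℓ)]; ring
          set M : ℝ := max 1 ((ℓ:ℝ) - k - c) with hM
          have hM1 : (1:ℝ) ≤ M := le_max_left _ _
          have hMpos : (0:ℝ) < M := by linarith
          have hℓcR : (2:ℝ) ≤ (ℓ:ℝ) - c := by
            have : ((c+2:ℕ):ℝ) ≤ (ℓ:ℝ) := by exact_mod_cast hℓc2
            push_cast at this
            linarith
          have hKgeR : (ℓ:ℝ) ≤ ((c:ℝ)+1)*k + c := by
            have : ((((c+1)*k + c):ℕ):ℝ) ≥ (ℓ:ℝ) := by exact_mod_cast hKge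
            push_cast at this
            linarith
          have hbM : b0 * M ≤ (ℓ:ℝ) - c := by
            rcases le_or_gt ((ℓ:ℝ) - k - c) 1 with h | h
            · have hM1' : M = 1 := max_eq_left h
              rw [hM1', mul_one, hb0, div_le_iff₀ hc0]
              have hp1 : 2*(c:ℝ) ≤ ((ℓ:ℝ)-c)*(c:ℝ) := mul_le_mul_of_nonneg_right hℓcR hc0.le
              have hc1R : (1:ℝ) ≤ (c:ℝ) := by exact_mod_cast hc1
              linarith
            · have hMe : M = (ℓ:ℝ) - k - c := max_eq_right (le_of_lt h)
              rw [hMe, hb0, div_mul_eq_mul_div, div_le_iff₀ hc0]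
              have hp2 : (ℓ:ℝ) - c ≤ ((c:ℝ)+1)*k := by linarith
              linarith
          have hlogstep : 1 + Real.logb b0 M ≤ Real.logb b0 ((ℓ:ℝ) - c) := by
            have h1 : Real.logb b0 (b0 * M) = 1 + Real.logb b0 M := by
              rw [Real.logb_mul (by positivity) (by positivity), Real.logb_self_eq_one hb]
            rw [← h1]
            exact Real.logb_le_logb_of_le hb (by positivity) hbM
          have e8 : max 1 ((ℓ:ℝ) - c) = (ℓ:ℝ) - c := max_eq_right (by linarith)
          rw [e2]
          rw [e8]
          rw [hcast] at hr4
          rw [← hM] at hr4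
          push_cast
          linarith [hr4, hminle, hlogstep]

/-- for `(q-1)/q < β ≤ 1`, `c = ⌈βq/(βq-(q-1))⌉`, `q' = (c+1)/c`,
every `q`-ary string of length at most `n` is at β-approximate duplication
distance at most `c + 1 + log_{q'} n` from a root. -/
theorem stmt10 (q n : ℕ) (hq : 2 ≤ q) (hn : 1 ≤ n) (β : ℝ)
    (hβ1 : ((q : ℝ) - 1) / q < β) (hβ2 : β ≤ 1)
    (c : ℕ) (hc : c = ⌈β * q / (β * q - ((q : ℝ) - 1))⌉₊)
    (v : List (Fin q)) (hv1 : v ≠ []) (hv2 : v.length ≤ n) :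
    ((sInf {m : ℕ | ∃ r : List (Fin q), r ≠ [] ∧ r.Nodup ∧ ApproxPath β m r v} : ℕ) : ℝ)
      ≤ (c : ℝ) + 1 + Real.logb (((c : ℝ) + 1) / c) n := by
  classical
  have hq0R : (0:ℝ) < q := by positivity
  have hβq : (q:ℝ) - 1 < β * q := by
    rw [div_lt_iff₀ hq0R] at hβ1
    linarith
  have hq1R : (1:ℝ) ≤ (q:ℝ) - 1 := by
    have : (2:ℝ) ≤ q := by exact_mod_cast hq
    linarith
  have hβ0 : 0 ≤ β := by
    have : (0:ℝ) ≤ ((q:ℝ)-1)/q := by positivity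
    linarith
  have hpos : (0:ℝ) < β * q - ((q:ℝ) - 1) := by linarith
  have hγc : β * q / (β * q - ((q:ℝ) - 1)) ≤ (c:ℝ) := by
    rw [hc]
    exact Nat.le_ceil _
  have hγle : β * q ≤ (c:ℝ) * (β * q - ((q:ℝ) - 1)) := by
    rw [div_le_iff₀ hpos] at hγc
    linarith
  have hc1 : 1 ≤ c := by
    have h1 : (1:ℝ) < β * q / (β * q - ((q:ℝ) - 1)) := by
      rw [lt_div_iff₀ hpos]
      linarith
    have : (1:ℝ) < (c:ℝ) := lt_of_lt_of_le h1 hγc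
    exact_mod_cast this.le
  have hc0 : (0:ℝ) < c := by
    have : (1:ℝ) ≤ (c:ℝ) := by exact_mod_cast hc1
    linarith
  have hb : (1:ℝ) < ((c:ℝ)+1)/c := (one_lt_div hc0).2 (by linarith)
  have hkey : ((c : ℝ) + 1) * ((q : ℝ) - 1) ≤ β * q * c := by nlinarith [hγle, hβq]
  obtain ⟨m, r, hr1, hr2, hr3, hr4⟩ := main_ind hq hβ0 hc1 hkey v.length v rfl hv1
  have hmem : m ∈ {m : ℕ | ∃ r : List (Fin q), r ≠ [] ∧ r.Nodup ∧ ApproxPath β m r v} :=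
    ⟨r, hr1, hr2, hr3⟩
  have hinf : sInf {m : ℕ | ∃ r : List (Fin q), r ≠ [] ∧ r.Nodup ∧ ApproxPath β m r v} ≤ m :=
    Nat.sInf_le hmem
  have hcast : ((sInf {m : ℕ | ∃ r : List (Fin q), r ≠ [] ∧ r.Nodup ∧ ApproxPath β m r v} : ℕ) : ℝ)
      ≤ (m : ℝ) := by exact_mod_cast hinf
  refine le_trans hcast (le_trans hr4 ?_)
  have h1 : ((min v.length (c+1) : ℕ) : ℝ) ≤ (c:ℝ) + 1 := by
    have : min v.length (c+1) ≤ c+1 := min_le_right _ _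
    exact_mod_cast this
  have h2 : Real.logb (((c:ℝ)+1)/c) (max 1 ((v.length:ℝ) - c)) ≤ Real.logb (((c:ℝ)+1)/c) n := by
    apply Real.logb_le_logb_of_le hb (by positivity)
    apply max_le
    · exact_mod_cast hn
    · have : (v.length:ℝ) ≤ (n:ℝ) := by exact_mod_cast hv2
      linarith [hc0]
  linarith [h1, h2]
end

section
/- Fix q ≥ 2 and 0 < β < (q-1)/q. If every q-ary string of length n can be generated from some root by at most f steps of β-approximate duplication, then q!·q·f·n^{3f}·q^{H_q(β)n} ≥ q^n, where H_q is the q-ary entropy function. -/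
open scoped BigOperators

/-!
A string of length `n` produced from a root by at most `f` approximate duplications is
determined by a short description: the root, which is a prefix of a permutation of the alphabet
(at most `q!·q` choices), the `f` triples `(p, ℓ, t)` with entries below `n` (padding short
paths with the no-op `ℓ = 0`), and the concatenated differences `b̂ - b`, a word of length `n`
with at most `βn` nonzero letters. Counting such words with weights `1 - β` for a zero and
`β/(q-1)` for each other letter bounds their number by `q^{H_q(β)n}`, and all `q^n` strings
must be described.
-/

open Finset Real

section ListLemmas

variable {α : Type*}

theorem List.zipWith_add_zipWith_sub [AddCommGroup α] :
    ∀ {b b' : List α}, b'.length = b.length →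
      List.zipWith (· + ·) b (List.zipWith (· - ·) b' b) = b'
  | [], [], _ => rfl
  | _ :: _, _ :: _, h => by
    simp only [List.zipWith_cons_cons, add_sub_cancel,
      List.zipWith_add_zipWith_sub (by simpa using h)]

theorem hammingNorm_eq_countP_ofFn [Zero α] [DecidableEq α] :
    ∀ {n : ℕ} (g : Fin n → α), hammingNorm g = (List.ofFn g).countP (· ≠ 0)
  | 0, g => by simp [hammingNorm]
  | n + 1, g => by
    rw [hammingNorm, Fin.card_filter_univ_succ', List.ofFn_succ, List.countP_cons, add_comm,
      ← hammingNorm, hammingNorm_eq_countP_ofFn]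
    simp

theorem List.exists_ofFn_eq {n : ℕ} (l : List α) (h : l.length = n) :
    ∃ g : Fin n → α, List.ofFn g = l := by
  subst h
  exact ⟨l.get, List.ofFn_get l⟩

end ListLemmas

theorem one_lt_and_lt_one_of_le_sub_one_div {q : ℕ} {β : ℝ} (hβ0 : 0 < β)
    (hβ1 : β ≤ ((q : ℝ) - 1) / q) : (1 : ℝ) < q ∧ β < 1 := by
  have hq : (1 : ℝ) < q := by
    by_contra! h
    have : ((q : ℝ) - 1) / q ≤ 0 := div_nonpos_of_nonpos_of_nonneg (by linarith) (by positivity)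
    linarith
  exact ⟨hq, hβ1.trans_lt <| (div_lt_one (by linarith)).2 (by linarith)⟩

theorem exp_neg_qaryEntropy_mul_le_pow_mul_pow {q c d : ℕ} {β : ℝ} (hβ0 : 0 < β)
    (hβ1 : β ≤ ((q : ℝ) - 1) / q) (hc : (c : ℝ) ≤ β * (c + d)) :
    exp (-(qaryEntropy q β * (c + d))) ≤ (β / ((q : ℝ) - 1)) ^ c * (1 - β) ^ d := by
  obtain ⟨hq, hβ⟩ := one_lt_and_lt_one_of_le_sub_one_div hβ0 hβ1
  have ha : 0 < β / ((q : ℝ) - 1) := div_pos hβ0 (by linarith)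
  have hb : 0 < 1 - β := by linarith
  -- a changed letter weighs at most as much as an unchanged one; here `β ≤ (q-1)/q` enters
  have hab : log (β / ((q : ℝ) - 1)) ≤ log (1 - β) := by
    refine log_le_log ha ((div_le_iff₀ (by linarith)).2 ?_)
    have := (le_div_iff₀ (by linarith : (0 : ℝ) < q)).1 hβ1
    nlinarith
  have hH : qaryEntropy q β = -(β * log (β / ((q : ℝ) - 1)) + (1 - β) * log (1 - β)) := by
    rw [qaryEntropy, binEntropy, log_div hβ0.ne' (by linarith), log_inv, log_inv]
    push_cast
    ring
  rw [← exp_log ha, ← exp_log hb, ← exp_nat_mul, ← exp_nat_mul, ← exp_add, exp_le_exp, hH]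
  nlinarith

theorem card_hammingNorm_le_le_exp_qaryEntropy {ι α : Type*} [Fintype ι] [DecidableEq ι]
    [Fintype α] [DecidableEq α] [Zero α] {β : ℝ} (hβ0 : 0 < β)
    (hβ1 : β ≤ ((Fintype.card α : ℝ) - 1) / Fintype.card α) :
    (#{x : ι → α | (hammingNorm x : ℝ) ≤ β * Fintype.card ι} : ℝ) ≤
      exp (qaryEntropy (Fintype.card α) β * Fintype.card ι) := by
  set q := Fintype.card α with hq_def
  set w : α → ℝ := fun y => if y = 0 then 1 - β else β / ((q : ℝ) - 1)
  obtain ⟨hq, hβ⟩ := one_lt_and_lt_one_of_le_sub_one_div hβ0 hβ1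
  have hw : ∀ y, 0 ≤ w y := fun y => by
    unfold w; split_ifs
    · linarith
    · exact div_nonneg hβ0.le (by linarith)
  have hw_sum : ∑ y, w y = 1 := by
    rw [Fintype.sum_eq_add_sum_compl 0, sum_congr rfl fun y hy => if_neg (by simpa using hy),
      sum_const, card_compl, card_singleton, nsmul_eq_mul, ← hq_def,
      Nat.cast_sub Fintype.card_pos]
    simp only [w, if_pos rfl, Nat.cast_one]
    have : ((q - 1 : ℝ)) ≠ 0 := by linarith
    field_simp
    ring
  have hprod : ∀ x : ι → α, ∏ i, w (x i) =
      (β / ((q : ℝ) - 1)) ^ hammingNorm x * (1 - β) ^ #{i | x i = 0} := by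
    intro x
    rw [prod_ite, prod_const, prod_const, mul_comm, hammingNorm]
  have hcard : ∀ x : ι → α, hammingNorm x + #{i | x i = 0} = Fintype.card ι := fun x => by
    rw [hammingNorm, add_comm, card_filter_add_card_filter_not, card_univ]
  have key : (#{x : ι → α | (hammingNorm x : ℝ) ≤ β * Fintype.card ι} : ℝ)
      * exp (-(qaryEntropy q β * Fintype.card ι)) ≤ 1 := calc
    _ = ∑ x : ι → α with (hammingNorm x : ℝ) ≤ β * Fintype.card ι,
          exp (-(qaryEntropy q β * Fintype.card ι)) := by rw [sum_const, nsmul_eq_mul]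
    _ ≤ ∑ x : ι → α with (hammingNorm x : ℝ) ≤ β * Fintype.card ι,
          ∏ i, w (x i) := by
      gcongr with x hx
      rw [hprod, ← hcard, Nat.cast_add]
      rw [mem_filter, ← hcard, Nat.cast_add] at hx
      exact exp_neg_qaryEntropy_mul_le_pow_mul_pow hβ0 hβ1 hx.2
    _ ≤ ∑ x : ι → α, ∏ i, w (x i) :=
      sum_le_sum_of_subset_of_nonneg (filter_subset _ _) fun x _ _ => prod_nonneg fun i _ => hw _
    _ = 1 := by rw [← Fintype.prod_sum, hw_sum, prod_const_one]
  rwa [exp_neg, ← div_eq_mul_inv, div_le_one (exp_pos _)] at key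

section Replay

variable {q : ℕ}

theorem countP_zipWith_sub_ne_zero [NeZero q] (b b' : List (Fin q)) :
    (List.zipWith (· - ·) b' b).countP (· ≠ 0) = listHammingDist b b' := by
  rw [listHammingDist, ← List.countP_eq_length_filter, List.zipWith_comm,
    ← List.map_uncurry_zip_eq_zipWith, List.countP_map]
  refine List.countP_congr fun p _ => ?_
  simp only [Function.comp_apply, Function.uncurry, ne_eq, decide_eq_true_eq, sub_eq_zero]
  exact ne_comm

def insertNoisyCopy (p ℓ t : ℕ) (x δ : List (Fin q)) : List (Fin q) :=
  x.take (p + ℓ + t) ++ List.zipWith (· + ·) ((x.drop p).take ℓ) δ ++ x.drop (p + ℓ + t)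

def replayCopies : List (ℕ × ℕ × ℕ) → List (Fin q) → List (Fin q) → List (Fin q)
  | [], x, _ => x
  | (p, ℓ, t) :: L, x, δ =>
    replayCopies L (insertNoisyCopy p ℓ t x (δ.take ℓ)) (δ.drop ℓ)

theorem replayCopies_replicate_append (p t k : ℕ) (L : List (ℕ × ℕ × ℕ))
    (x δ : List (Fin q)) :
    replayCopies (List.replicate k (p, 0, t) ++ L) x δ = replayCopies L x δ := by
  induction k with
  | zero => rfl
  | succ k ih => simpa [List.replicate_succ, replayCopies, insertNoisyCopy] using ih

theorem insertNoisyCopy_append [NeZero q] (a b c b' d : List (Fin q)) (h : b'.length = b.length) :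
    insertNoisyCopy a.length b.length c.length (a ++ b ++ c ++ d) (List.zipWith (· - ·) b' b) =
      a ++ b ++ c ++ b' ++ d := by
  have habc : (a ++ b ++ c).length = a.length + b.length + c.length := by simp [Nat.add_assoc]
  have hb : ((a ++ b ++ c ++ d).drop a.length).take b.length = b := by simp
  rw [insertNoisyCopy, hb, List.take_left' habc, List.drop_left' habc,
    List.zipWith_add_zipWith_sub h]

theorem ApproxPath.exists_replayCopies [NeZero q] {β : ℝ} {n : ℕ} :
    ∀ {m : ℕ} {x v : List (Fin q)}, ApproxPath β m x v → v.length ≤ n →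
      ∃ (L : List (ℕ × ℕ × ℕ)) (δ : List (Fin q)), L.length = m ∧
        (∀ s ∈ L, s.1 < n ∧ s.2.1 < n ∧ s.2.2 < n) ∧ x.length + δ.length = v.length ∧
        (δ.countP (· ≠ 0) : ℝ) ≤ β * δ.length ∧ ∀ e, replayCopies L x (δ ++ e) = v
  | 0, _, _, rfl, _ => ⟨[], [], rfl, by simp, rfl, by simp, fun _ => rfl⟩
  | _ + 1, _, _, ⟨_, ⟨a, b, c, b', d, hb, hb', hdist, rfl, rfl⟩, h⟩, hv => by
    obtain ⟨L, δ, hL, hLn, hδ, hδcount, hreplay⟩ := h.exists_replayCopies hv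
    have hb0 := List.length_pos_iff.2 hb
    have hdiff : (List.zipWith (· - ·) b' b).length = b.length := by simp [hb']
    simp only [List.length_append] at hδ
    refine ⟨(a.length, b.length, c.length) :: L, List.zipWith (· - ·) b' b ++ δ, by simp [hL],
      ?_, ?_, ?_, fun e => ?_⟩
    · simp only [List.mem_cons, forall_eq_or_imp]
      exact ⟨by omega, hLn⟩
    · simp only [List.length_append, hdiff]
      omega
    · rw [List.countP_append, countP_zipWith_sub_ne_zero, List.length_append, hdiff]
      push_cast
      linarith
    · rw [replayCopies, List.append_assoc _ δ e, List.take_left' hdiff, List.drop_left' hdiff,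
        insertNoisyCopy_append a b c b' d hb', hreplay]

end Replay

theorem List.Nodup.exists_perm_take_eq {q : ℕ} {r : List (Fin q)} (hr : r.Nodup) (h0 : r ≠ []) :
    ∃ (σ : Equiv.Perm (Fin q)) (j : Fin q), (List.ofFn σ).take (j + 1) = r := by
  classical
  set s := r ++ (List.finRange q).filter (· ∉ r)
  have hs : s.Nodup := hr.append ((List.nodup_finRange q).filter _) fun x hx hx' => by
    simp_all
  have hmem : ∀ x, x ∈ s := fun x => by by_cases x ∈ r <;> simp_all [s]
  set e := hs.getEquivOfForallMemList s hmem
  have hlen : s.length = q := by simpa using Fintype.card_congr e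
  have hr0 := List.length_pos_iff.2 h0
  have hrs : r.length ≤ s.length := by simp [s]
  refine ⟨(finCongr hlen.symm).trans e, ⟨r.length - 1, by omega⟩, ?_⟩
  have hσ : List.ofFn ((finCongr hlen.symm).trans e) = s := by
    refine List.ext_getElem (by simp [hlen]) fun i _ _ => ?_
    simp [e]
  rw [hσ, Nat.sub_add_cancel hr0]
  exact List.take_left

def replayDescription {q n f : ℕ}
    (d : Equiv.Perm (Fin q) × Fin q × (Fin f → Fin n × Fin n × Fin n) × (Fin n → Fin q)) :
    List (Fin q) :=
  replayCopies ((List.ofFn d.2.2.1).map fun s => ((s.1 : ℕ), (s.2.1 : ℕ), (s.2.2 : ℕ)))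
    ((List.ofFn d.1).take (d.2.1 + 1)) (List.ofFn d.2.2.2)

theorem exists_replayDescription_eq {q n f : ℕ} [NeZero q] [NeZero n] {β : ℝ} (hβ : 0 ≤ β)
    {r v : List (Fin q)} {m : ℕ} (hr : r.Nodup) (hr0 : r ≠ []) (hm : m ≤ f)
    (hpath : ApproxPath β m r v) (hv : v.length = n) :
    ∃ d : Equiv.Perm (Fin q) × Fin q × (Fin f → Fin n × Fin n × Fin n) × (Fin n → Fin q),
      (hammingNorm d.2.2.2 : ℝ) ≤ β * n ∧ replayDescription d = v := by
  obtain ⟨L, δ, hL, hLn, hδ, hcount, hreplay⟩ := hpath.exists_replayCopies hv.le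
  obtain ⟨σ, j, hσ⟩ := hr.exists_perm_take_eq hr0
  obtain ⟨l, hl⟩ : List.replicate (f - m) (0, 0, 0) ++ L ∈
      Set.range (List.map fun s : Fin n × Fin n × Fin n =>
        ((s.1 : ℕ), (s.2.1 : ℕ), (s.2.2 : ℕ))) := by
    rw [Set.range_list_map]
    intro s hs
    rcases List.mem_append.1 hs with hs | hs
    · exact ⟨0, (List.eq_of_mem_replicate hs).symm⟩
    · obtain ⟨h1, h2, h3⟩ := hLn s hs
      exact ⟨(⟨_, h1⟩, ⟨_, h2⟩, ⟨_, h3⟩), rfl⟩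
  obtain ⟨S, hS⟩ := List.exists_ofFn_eq l (by
    simpa [hL, hm] using congrArg List.length hl)
  obtain ⟨g, hg⟩ := List.exists_ofFn_eq (n := n) (δ ++ List.replicate (n - δ.length) 0) (by
    rw [List.length_append, List.length_replicate]; omega)
  refine ⟨(σ, j, S, g), ?_, ?_⟩
  · have hδn : (δ.length : ℝ) ≤ n := by exact_mod_cast (by omega : δ.length ≤ n)
    rw [hammingNorm_eq_countP_ofFn, hg, List.countP_append, List.countP_replicate, if_neg (by simp),
      add_zero]
    exact hcount.trans (mul_le_mul_of_nonneg_left hδn hβ)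
  · rw [replayDescription, hS, hl, hσ, hg, replayCopies_replicate_append, hreplay]

theorem pow_le_of_forall_approxPath {q n f : ℕ} [NeZero q] [NeZero n] {β : ℝ} (hβ : 0 ≤ β)
    (hgen : ∀ v : List (Fin q), v.length = n →
      ∃ (r : List (Fin q)) (m : ℕ), r ≠ [] ∧ r.Nodup ∧ m ≤ f ∧ ApproxPath β m r v) :
    q ^ n ≤ q.factorial * q * n ^ (3 * f) *
      #{g : Fin n → Fin q | (hammingNorm g : ℝ) ≤ β * n} := by
  let descriptions : Finset (Equiv.Perm (Fin q) × Fin q × (Fin f → Fin n × Fin n × Fin n) ×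
      (Fin n → Fin q)) :=
    univ ×ˢ univ ×ˢ univ ×ˢ univ.filter fun g => (hammingNorm g : ℝ) ≤ β * n
  have hsurj : Set.SurjOn (replayDescription (q := q) (n := n) (f := f)) ↑descriptions
      ↑((univ : Finset (Fin n → Fin q)).map ⟨List.ofFn, List.ofFn_injective⟩) := by
    intro v hv
    obtain ⟨w, -, rfl⟩ := Finset.mem_map.1 hv
    obtain ⟨r, m, hr0, hr, hm, hpath⟩ := hgen (List.ofFn w) List.length_ofFn
    obtain ⟨d, hd, hdv⟩ := exists_replayDescription_eq hβ hr hr0 hm hpath List.length_ofFn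
    exact ⟨d, by simpa [descriptions] using hd, hdv⟩
  have := card_le_card_of_surjOn _ hsurj
  simp only [descriptions, card_map, card_univ, Fintype.card_fun, Fintype.card_fin, card_product,
    Fintype.card_perm, Fintype.card_prod] at this
  convert this using 1
  ring

/-- if every `q`-ary string of length `n` is generated from some
root by at most `f` β-approximate duplications, then
`q!·q·f·n^{3f}·q^{H_q(β)n} ≥ q^n`. -/
theorem stmt13 (q n f : ℕ) (hq : 2 ≤ q) (hn : 1 ≤ n) (hf : 1 ≤ f) (β : ℝ)
    (hβ0 : 0 < β) (hβ1 : β < ((q : ℝ) - 1) / q)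
    (Hq : ℝ)
    (hHq : Hq = -β * Real.logb q β - (1 - β) * Real.logb q (1 - β)
        + β * Real.logb q ((q : ℝ) - 1))
    (hgen : ∀ v : List (Fin q), v.length = n →
      ∃ (r : List (Fin q)) (m : ℕ), r ≠ [] ∧ r.Nodup ∧ m ≤ f ∧ ApproxPath β m r v) :
    (q : ℝ) ^ n ≤ (q.factorial : ℝ) * q * f * (n : ℝ) ^ (3 * f) * (q : ℝ) ^ (Hq * n) := by
  have : NeZero q := ⟨by omega⟩
  have : NeZero n := ⟨by omega⟩
  have hq1 : (1 : ℝ) < q := by exact_mod_cast hq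
  have hcount := pow_le_of_forall_approxPath hβ0.le hgen
  have hball := card_hammingNorm_le_le_exp_qaryEntropy (ι := Fin n) (α := Fin q) hβ0
    (by simpa using hβ1.le)
  have hH : qaryEntropy q β * n = Real.log q * (Hq * n) := by
    have : Real.log q ≠ 0 := (Real.log_pos hq1).ne'
    rw [hHq, qaryEntropy, binEntropy, Real.log_inv, Real.log_inv]
    simp only [Real.logb]
    push_cast
    field_simp
    ring
  rw [Fintype.card_fin, Fintype.card_fin, hH, ← Real.rpow_def_of_pos (by linarith)] at hball
  calc (q : ℝ) ^ n ≤ q.factorial * q * n ^ (3 * f) *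
        #{g : Fin n → Fin q | (hammingNorm g : ℝ) ≤ β * n} := by exact_mod_cast hcount
    _ ≤ q.factorial * q * 1 * n ^ (3 * f) * (q : ℝ) ^ (Hq * n) := by
        rw [mul_one]; gcongr
    _ ≤ _ := by gcongr; exact_mod_cast hf
end

section
/- For a q-ary alphabet with q ≥ 2, β in [0, (q-1)/q), and any positive integer n, the Hamming ball of radius βn centered at any string in A_q^n has size at most q^{H_q(β)n}, where H_q(x) = -x log_q(x) - (1-x) log_q(1-x) + x log_q(q-1). -/
/-!
Generating-function (Chernoff) bound. Weighting each word `y` by `x ^ d(y, c)` gives total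
weight `(1 + (q - 1) x) ^ n`, and for `0 ≤ x ≤ 1` every word of the ball has weight at least
`x ^ (β n)`. The optimal choice `x = β / ((q - 1)(1 - β))`, which is `≤ 1` exactly when
`β ≤ (q - 1) / q`, turns the bound `(1 + (q - 1) x) ^ n / x ^ (β n)` into `exp (n H(β))`, where
`H` is Mathlib's `qaryEntropy` (in nats, so the base-`q` entropy of the statement is
`qaryEntropy q β / log q`).
-/

open scoped BigOperators

open Finset Real

section HammingBall

variable {ι α : Type*} [Fintype ι] [DecidableEq ι] [Fintype α] [DecidableEq α]

theorem sum_pow_hammingDist {R : Type*} [CommRing R] (c : ι → α) (x : R) :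
    ∑ y : ι → α, x ^ hammingDist y c
      = (1 + ((Fintype.card α : R) - 1) * x) ^ Fintype.card ι := by
  have hcoord : ∀ i, ∑ a : α, (if a = c i then 1 else x)
      = 1 + ((Fintype.card α : R) - 1) * x := by
    intro i
    simp only [fun a => show (if a = c i then 1 else x) = x + if a = c i then 1 - x else 0 by
      split_ifs <;> ring]
    rw [sum_add_distrib, sum_ite_eq', if_pos (mem_univ _), sum_const, card_univ, nsmul_eq_mul]
    ring
  calc ∑ y : ι → α, x ^ hammingDist y c
      = ∑ y : ι → α, ∏ i, (if y i = c i then 1 else x) := by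
        refine sum_congr rfl fun y _ => ?_
        rw [prod_ite, prod_const_one, one_mul, prod_const, hammingDist]
    _ = (1 + ((Fintype.card α : R) - 1) * x) ^ Fintype.card ι := by
        rw [← Fintype.prod_sum (fun i a => if a = c i then 1 else x),
          prod_congr rfl fun i _ => hcoord i, prod_const, card_univ]

theorem card_hammingBall_mul_rpow_le (c : ι → α) {x : ℝ} (hx0 : 0 ≤ x) (hx1 : x ≤ 1) (r : ℝ) :
    (Nat.card {y : ι → α // (hammingDist y c : ℝ) ≤ r} : ℝ) * x ^ r
      ≤ (1 + ((Fintype.card α : ℝ) - 1) * x) ^ Fintype.card ι := by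
  classical
  rw [Nat.card_eq_fintype_card, Fintype.card_subtype, ← sum_pow_hammingDist c x, ← nsmul_eq_mul,
    ← sum_const]
  calc ∑ _y ∈ univ.filter fun y => (hammingDist y c : ℝ) ≤ r, x ^ r
      ≤ ∑ y ∈ univ.filter fun y => (hammingDist y c : ℝ) ≤ r, x ^ hammingDist y c := by
        refine sum_le_sum fun y hy => ?_
        rw [← rpow_natCast]
        exact rpow_le_rpow_of_exponent_ge' hx0 hx1 (Nat.cast_nonneg _) (mem_filter.mp hy).2
    _ ≤ ∑ y : ι → α, x ^ hammingDist y c :=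
        sum_le_sum_of_subset_of_nonneg (subset_univ _) fun y _ _ => pow_nonneg hx0 _

theorem exp_mul_qaryEntropy_mul_rpow {q : ℕ} (hq : 1 < q) {β : ℝ} (hβ0 : 0 < β) (hβ1 : β < 1)
    (n : ℝ) :
    exp (n * qaryEntropy q β) * (β / (((q : ℝ) - 1) * (1 - β))) ^ (β * n)
      = (1 - β) ^ (-n) := by
  have hq1 : (0 : ℝ) < q - 1 := by
    rw [sub_pos]; exact_mod_cast hq
  have h1β : 0 < 1 - β := sub_pos.mpr hβ1
  rw [rpow_def_of_pos (div_pos hβ0 (mul_pos hq1 h1β)), rpow_def_of_pos h1β, ← exp_add]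
  congr 1
  rw [qaryEntropy, binEntropy, log_div hβ0.ne' (mul_pos hq1 h1β).ne', log_mul hq1.ne' h1β.ne',
    log_inv, log_inv]
  push_cast
  ring

theorem card_hammingBall_le_exp_qaryEntropy (c : ι → α) (hα : 2 ≤ Fintype.card α) {β : ℝ}
    (hβ0 : 0 ≤ β) (hβ : β ≤ ((Fintype.card α : ℝ) - 1) / Fintype.card α) :
    (Nat.card {y : ι → α // (hammingDist y c : ℝ) ≤ β * Fintype.card ι} : ℝ)
      ≤ exp (Fintype.card ι * qaryEntropy (Fintype.card α) β) := by
  have hq : (2 : ℝ) ≤ Fintype.card α := by exact_mod_cast hα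
  set q : ℝ := (Fintype.card α : ℝ)
  set n : ℝ := (Fintype.card ι : ℝ)
  have hq1 : 0 < q - 1 := by linarith
  have hβ1 : β < 1 := hβ.trans_lt <| by rw [div_lt_one (by linarith)]; linarith
  have h1β : 0 < 1 - β := sub_pos.mpr hβ1
  rcases hβ0.eq_or_lt with rfl | hβpos
  · simp
  set x := β / ((q - 1) * (1 - β))
  have hx0 : 0 < x := div_pos hβpos (mul_pos hq1 h1β)
  have hx1 : x ≤ 1 := by
    rw [div_le_one (mul_pos hq1 h1β)]
    rw [le_div_iff₀ (by linarith)] at hβ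
    linarith
  have hbase : 1 + (q - 1) * x = (1 - β)⁻¹ := by
    simp only [x]
    field_simp [hq1.ne']
    ring
  have hball := card_hammingBall_mul_rpow_le c hx0.le hx1 (β * n)
  rw [hbase, inv_pow, ← rpow_natCast, ← rpow_neg h1β.le,
    ← exp_mul_qaryEntropy_mul_rpow (by exact_mod_cast hα) hβpos hβ1] at hball
  exact le_of_mul_le_mul_right hball (rpow_pos_of_pos hx0 _)

end HammingBall

theorem rpow_logb_entropy_eq_exp_qaryEntropy {q : ℕ} (hq : 1 < q) (β n : ℝ) :
    (q : ℝ) ^ ((-β * logb q β - (1 - β) * logb q (1 - β) + β * logb q ((q : ℝ) - 1)) * n)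
      = exp (n * qaryEntropy q β) := by
  have hlog : log q ≠ 0 := by
    have : (1 : ℝ) < q := by exact_mod_cast hq
    exact (log_pos this).ne'
  rw [rpow_def_of_pos (by positivity)]
  congr 1
  simp only [logb, qaryEntropy, binEntropy, log_inv]
  push_cast
  field_simp
  ring

theorem stmt14_general (q n : ℕ) (hq : 2 ≤ q) (β : ℝ)
    (hβ0 : 0 ≤ β) (hβ1 : β < ((q : ℝ) - 1) / q) (center : Fin n → Fin q) :
    (Nat.card {y : Fin n → Fin q // (hammingDist y center : ℝ) ≤ β * n} : ℝ)
      ≤ (q : ℝ) ^ ((-β * Real.logb q β - (1 - β) * Real.logb q (1 - β)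
          + β * Real.logb q ((q : ℝ) - 1)) * n) := by
  have hball := card_hammingBall_le_exp_qaryEntropy center (by simpa using hq) hβ0
    (by simpa using hβ1.le)
  simp only [Fintype.card_fin] at hball
  rwa [rpow_logb_entropy_eq_exp_qaryEntropy hq]

/-- for `0 ≤ β < (q-1)/q` the Hamming ball of radius `βn` in
`A_q^n` has size at most `q^{H_q(β)n}`. -/
theorem stmt14 (q n : ℕ) (hq : 2 ≤ q) (hn : 1 ≤ n) (β : ℝ)
    (hβ0 : 0 ≤ β) (hβ1 : β < ((q : ℝ) - 1) / q) (center : Fin n → Fin q) :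
    (Nat.card {y : Fin n → Fin q // (hammingDist y center : ℝ) ≤ β * n} : ℝ)
      ≤ (q : ℝ) ^ ((-β * Real.logb q β - (1 - β) * Real.logb q (1 - β)
          + β * Real.logb q ((q : ℝ) - 1)) * n) :=
  stmt14_general q n hq β hβ0 hβ1 center
end
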